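/- arXiv:2511.21418 — 3 statements merged into one kernel-verified Lean document; each statement's English description precedes it below -/
import Mathlib

section
/- There is an absolute constant C > 0 such that the following holds. Let n ≥ 2 be an integer, ε ∈ (0, 1/2), λ = 2·ln(1/ε), and l = ⌈C·ln(1/ε)⌉. Fix an integer r ≥ 0 with 2^r·λ/n ≤ ln(10/9), and let I = [0, λ/n] if r = 0 and I = [2^{r−1}λ/n, 2^r λ/n] if r ≥ 1. Let B ⊂ ℝ∖{0} be a finite set with ln(1/|x|) ∈ I for every x ∈ B, let (a_x)_{x∈B} be positive weights, and set w = Σ_{x∈B} a_x. Let t_0, …, t_l be the degree-l Chebyshev nodes in I. Then there exist real coefficients a_0^+, …, a_l^+ and a_0^−, …, a_l^− with Σ_{i=0}^{l}(|a_i^+| + |a_i^−|) ≤ C·l·w such that for every integer t with 0 ≤ t ≤ 2n−2: |Σ_{x∈B} a_x x^t − Σ_{i=0}^{l} a_i^+ e^{−t_i t} − (−1)^t Σ_{i=0}^{l} a_i^− e^{−t_i t}| ≤ ε·w. -/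
open scoped BigOperators

/-- A matrix is Hankel if its entries depend only on the sum of the indices. -/
def IsHankel {n : ℕ} (A : Matrix (Fin n) (Fin n) ℝ) : Prop :=
  ∀ i j k l : Fin n, (i : ℕ) + (j : ℕ) = (k : ℕ) + (l : ℕ) → A i j = A k l

/-- Euclidean (ℓ₂) norm of a vector. -/
noncomputable def euclNorm {n : ℕ} (x : Fin n → ℝ) : ℝ := Real.sqrt (∑ i, x i ^ 2)

/-- Spectral norm of a matrix: supremum of ‖Ax‖₂ over the Euclidean unit ball. -/
noncomputable def specNorm {n : ℕ} (A : Matrix (Fin n) (Fin n) ℝ) : ℝ :=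
  ⨆ x : {x : Fin n → ℝ // euclNorm x ≤ 1}, euclNorm (A.mulVec x.1)

/-- Frobenius norm of a matrix. -/
noncomputable def froNorm {n : ℕ} (A : Matrix (Fin n) (Fin n) ℝ) : ℝ :=
  Real.sqrt (∑ i, ∑ j, (A i j) ^ 2)
/-- The degree-`l` Chebyshev nodes in the interval `[a,b]`:
`t_i = (a+b)/2 + ((b−a)/2)·cos(iπ/l)` for `i = 0, …, l`. -/
noncomputable def chebNode (a b : ℝ) (l i : ℕ) : ℝ :=
  (a + b) / 2 + ((b - a) / 2) * Real.cos (i * Real.pi / l)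

set_option maxHeartbeats 1000000

open Real Finset Nat



/-- Trapezoid weights for Chebyshev extrema. -/
noncomputable def wtB (l i : ℕ) : ℝ := if i = 0 ∨ i = l then 1/2 else 1

lemma wtB_nonneg (l i : ℕ) : 0 ≤ wtB l i := by
  unfold wtB; split <;> norm_num

lemma wtB_le_one (l i : ℕ) : wtB l i ≤ 1 := by
  unfold wtB; split <;> norm_num

lemma sum_wtB (l : ℕ) (hl : 1 ≤ l) : ∑ i ∈ range (l+1), wtB l i = l := by
  induction l with
  | zero => omega
  | succ n ih =>
    rcases Nat.eq_or_lt_of_le hl with h | h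
    · simp only [← h]
      norm_num [wtB, Finset.sum_range_succ]
    · have hn : 1 ≤ n := by omega
      have key : ∀ i ∈ range (n+1), wtB (n+1) i = wtB n i + (if i = n then 1/2 else 0)
          - (if i = n + 1 then 1/2 else 0) := by
        intro i hi
        simp only [mem_range] at hi
        unfold wtB
        rcases Nat.eq_or_lt_of_le (Nat.lt_succ_iff.mp hi) with h1 | h1
        · have hne : n ≠ 0 := by omega
          have hne2 : n ≠ n+1 := by omega
          simp [h1, hne, hne2]
          norm_num
        · have : ¬ (i = n) := by omega
          have h2 : ¬ (i = n+1) := by omega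
          simp [this, h2]
      rw [Finset.sum_range_succ, Finset.sum_congr rfl key]
      have hwl : wtB (n+1) (n+1) = 1/2 := by simp [wtB]
      rw [hwl]
      simp only [Finset.sum_add_distrib, Finset.sum_sub_distrib, ih hn]
      rw [Finset.sum_ite_eq' (range (n+1)) n, Finset.sum_ite_eq' (range (n+1)) (n+1)]
      simp [Nat.cast_succ]
      ring



/-- telescoping cosine sum -/
lemma tel_cos (ψ : ℝ) (n : ℕ) :
    (∑ i ∈ range n, Real.cos (i * ψ)) * (2 * Real.sin (ψ/2))
      = Real.sin ((n:ℝ) * ψ - ψ/2) + Real.sin (ψ/2) := by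
  have key : ∀ i : ℕ, Real.cos (i * ψ) * (2 * Real.sin (ψ/2))
      = Real.sin (((i+1:ℕ):ℝ) * ψ - ψ/2) - Real.sin ((i:ℝ) * ψ - ψ/2) := by
    intro i
    have h1 : ((i+1:ℕ):ℝ) * ψ - ψ/2 = (i:ℝ)*ψ + ψ/2 := by push_cast; ring
    rw [h1, Real.sin_add, Real.sin_sub]
    ring
  rw [Finset.sum_mul]
  rw [Finset.sum_congr rfl (fun i _ => key i)]
  rw [Finset.sum_range_sub (fun i : ℕ => Real.sin ((i:ℝ) * ψ - ψ/2))]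
  simp [Real.sin_neg]

/-- Discrete cosine sum with trapezoid weights. -/
lemma Dlem (l : ℕ) (hl : 1 ≤ l) (p : ℕ) (hp : p ≤ 2*l) :
    ∑ i ∈ range (l+1), wtB l i * Real.cos ((p:ℝ) * ((i:ℝ) * π / l))
      = if p = 0 ∨ p = 2*l then (l:ℝ) else 0 := by
  have hl0 : (l:ℝ) ≠ 0 := by positivity
  rcases (em (p = 0 ∨ p = 2*l)) with h | h
  · rw [if_pos h]
    have hc : ∀ i ∈ range (l+1), wtB l i * Real.cos ((p:ℝ) * ((i:ℝ) * π / l)) = wtB l i := by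
      intro i _
      rcases h with h | h
      · simp [h]
      · have : (p:ℝ) * ((i:ℝ) * π / l) = (i:ℝ) * (2*π) := by
          subst h; push_cast; field_simp
        rw [this, Real.cos_nat_mul_two_pi, mul_one]
    rw [Finset.sum_congr rfl hc, sum_wtB l hl]
  · rw [if_neg h]
    push_neg at h
    obtain ⟨hp0, hp2l⟩ := h
    set ψ : ℝ := (p:ℝ) * π / l with hψ
    have hppos : 0 < (p:ℝ) := by exact_mod_cast Nat.pos_of_ne_zero hp0
    have hlpos : 0 < (l:ℝ) := by exact_mod_cast hl
    have hψpos : 0 < ψ/2 := by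
      rw [hψ]
      have := Real.pi_pos
      positivity
    have hψlt : ψ/2 < π := by
      rw [hψ]
      rw [div_div, div_lt_iff₀ (by positivity)]
      have hplt : (p:ℝ) < 2*l := by
        have : p < 2*l := lt_of_le_of_ne hp hp2l
        exact_mod_cast this
      calc (p:ℝ) * π < (2*l) * π := by
            exact mul_lt_mul_of_pos_right hplt Real.pi_pos
        _ = π * (l*2) := by ring
    have hsin : 0 < Real.sin (ψ/2) := Real.sin_pos_of_pos_of_lt_pi hψpos hψlt
    -- rewrite each term as cos(i*ψ)
    have harg : ∀ i : ℕ, (p:ℝ) * ((i:ℝ) * π / l) = (i:ℝ) * ψ := by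
      intro i; rw [hψ]; ring
    -- weighted sum = full sum - (1 + cos(l ψ))/2
    have hsplit : ∑ i ∈ range (l+1), wtB l i * Real.cos ((p:ℝ) * ((i:ℝ) * π / l))
        = (∑ i ∈ range (l+1), Real.cos ((i:ℝ) * ψ)) - (Real.cos ((0:ℝ)*ψ) + Real.cos ((l:ℝ)*ψ))/2 := by
      have e1 : ∀ i ∈ range (l+1), wtB l i * Real.cos ((p:ℝ) * ((i:ℝ) * π / l))
          = Real.cos ((i:ℝ)*ψ) - (if i = 0 then Real.cos ((i:ℝ)*ψ)/2 else 0)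
            - (if i = l then Real.cos ((i:ℝ)*ψ)/2 else 0) := by
        intro i hi
        rw [harg i]
        unfold wtB
        have hil : i = 0 → ¬ i = l := by omega
        have hl0' : ¬ (0 = l) := by omega
        have hl0'' : ¬ (l = 0) := by omega
        by_cases h0 : i = 0
        · simp [h0, hil h0, hl0']; norm_num
        · by_cases h1 : i = l
          · simp [h0, h1, hl0'']; ring
          · simp [h0, h1]
      rw [Finset.sum_congr rfl e1]
      simp only [Finset.sum_sub_distrib]
      rw [Finset.sum_ite_eq' (range (l+1)) 0 (fun i => Real.cos ((i:ℝ)*ψ)/2),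
          Finset.sum_ite_eq' (range (l+1)) l (fun i => Real.cos ((i:ℝ)*ψ)/2)]
      simp only [mem_range, Nat.lt_succ_iff, Nat.zero_le, le_refl, if_pos]
      push_cast
      ring
    rw [hsplit]
    -- evaluate full sum via telescoping
    have hfull : (∑ i ∈ range (l+1), Real.cos ((i:ℝ)*ψ)) * (2 * Real.sin (ψ/2))
        = Real.sin (((l+1:ℕ):ℝ) * ψ - ψ/2) + Real.sin (ψ/2) := tel_cos ψ (l+1)
    have hlψ : (l:ℝ) * ψ = (p:ℝ) * π := by rw [hψ]; field_simp
    have hsin2 : Real.sin (((l+1:ℕ):ℝ) * ψ - ψ/2) = (-1:ℝ)^p * Real.sin (ψ/2) := by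
      have : ((l+1:ℕ):ℝ) * ψ - ψ/2 = ψ/2 + (p:ℤ) * π := by
        push_cast
        rw [add_mul, hlψ]
        ring
      rw [this, Real.sin_add_int_mul_pi]
      norm_num
    have hcos2 : Real.cos ((l:ℝ)*ψ) = (-1:ℝ)^p := by
      rw [hlψ]
      rw [show (p:ℝ)*π = (p:ℤ)*π - 0 by push_cast; ring, Real.cos_int_mul_pi_sub]
      norm_num
    have hfull2 : (∑ i ∈ range (l+1), Real.cos ((i:ℝ)*ψ)) = ((-1:ℝ)^p + 1)/2 := by
      have h2s : (2 * Real.sin (ψ/2)) ≠ 0 := by positivity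
      rw [hsin2] at hfull
      have : (((-1:ℝ)^p + 1)/2) * (2 * Real.sin (ψ/2)) = (-1:ℝ)^p * Real.sin (ψ/2) + Real.sin (ψ/2) := by ring
      rw [← this] at hfull
      exact mul_right_cancel₀ h2s hfull
    rw [hfull2, hcos2]
    simp
    ring




/-- auxiliary: one-sided orthogonality, assuming m ≤ k. -/
lemma Slem_aux (l k m : ℕ) (hl : 1 ≤ l) (hk : k ≤ l) (hm : m ≤ k) :
    ∑ i ∈ range (l+1), wtB l i *
        (Real.cos ((k:ℝ) * ((i:ℝ) * π / l)) * Real.cos ((m:ℝ) * ((i:ℝ) * π / l)))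
      = if k = m then (if k = 0 ∨ k = l then (l:ℝ) else l/2) else 0 := by
  have hprod : ∀ i : ℕ, Real.cos ((k:ℝ) * ((i:ℝ) * π / l)) * Real.cos ((m:ℝ) * ((i:ℝ) * π / l))
      = (Real.cos (((k+m:ℕ):ℝ) * ((i:ℝ) * π / l)) + Real.cos (((k-m:ℕ):ℝ) * ((i:ℝ) * π / l)))/2 := by
    intro i
    set x : ℝ := (i:ℝ) * π / l
    have h1 : ((k+m:ℕ):ℝ) * x = (k:ℝ)*x + (m:ℝ)*x := by push_cast; ring
    have h2 : ((k-m:ℕ):ℝ) * x = (k:ℝ)*x - (m:ℝ)*x := by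
      rw [Nat.cast_sub hm]; ring
    rw [h1, h2, Real.cos_add, Real.cos_sub]
    ring
  have hsum : ∑ i ∈ range (l+1), wtB l i *
        (Real.cos ((k:ℝ) * ((i:ℝ) * π / l)) * Real.cos ((m:ℝ) * ((i:ℝ) * π / l)))
      = ((∑ i ∈ range (l+1), wtB l i * Real.cos (((k+m:ℕ):ℝ) * ((i:ℝ) * π / l)))
        + (∑ i ∈ range (l+1), wtB l i * Real.cos (((k-m:ℕ):ℝ) * ((i:ℝ) * π / l))))/2 := by
    rw [← Finset.sum_add_distrib]
    rw [Finset.sum_div]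
    refine Finset.sum_congr rfl (fun i _ => ?_)
    rw [hprod i]
    ring
  rw [hsum, Dlem l hl (k+m) (by omega), Dlem l hl (k-m) (by omega)]
  by_cases hkm : k = m
  · subst hkm
    simp only [Nat.sub_self]
    by_cases h0 : k = 0
    · subst h0
      simp
    · by_cases h1 : k = l
      · subst h1
        have : k + k = 2*k := by ring
        simp [this]
      · have h2 : ¬ (k + k = 0 ∨ k + k = 2*l) := by omega
        have h3 : ¬ (k*2 = l*2) := by omega
        simp [h2, h0, h1]
        omega
  · have h2 : ¬ (k + m = 0 ∨ k + m = 2*l) := by omega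
    have h3 : ¬ (k - m = 0 ∨ k - m = 2*l) := by omega
    rw [if_neg h2, if_neg h3, if_neg hkm]
    norm_num

lemma Slem (l k m : ℕ) (hl : 1 ≤ l) (hk : k ≤ l) (hm : m ≤ l) :
    ∑ i ∈ range (l+1), wtB l i *
        (Real.cos ((k:ℝ) * ((i:ℝ) * π / l)) * Real.cos ((m:ℝ) * ((i:ℝ) * π / l)))
      = if k = m then (if k = 0 ∨ k = l then (l:ℝ) else l/2) else 0 := by
  rcases le_total m k with h | h
  · exact Slem_aux l k m hl hk h
  · have := Slem_aux l m k hl hm h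
    have hswap : ∀ i ∈ range (l+1), wtB l i *
        (Real.cos ((k:ℝ) * ((i:ℝ) * π / l)) * Real.cos ((m:ℝ) * ((i:ℝ) * π / l)))
        = wtB l i * (Real.cos ((m:ℝ) * ((i:ℝ) * π / l)) * Real.cos ((k:ℝ) * ((i:ℝ) * π / l))) := by
      intro i _; ring
    rw [Finset.sum_congr rfl hswap, this]
    by_cases hkm : k = m
    · subst hkm; simp
    · rw [if_neg hkm, if_neg (fun hh => hkm hh.symm)]

/-- the explicit coefficient functional -/
noncomputable def alphB (l : ℕ) (ph : ℝ) (i : ℕ) : ℝ :=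
  (2 / l) * wtB l i * ∑ k ∈ range (l+1),
    wtB l k * (Real.cos ((k:ℝ) * ((i:ℝ) * π / l)) * Real.cos ((k:ℝ) * ph))

lemma alphB_abs_le (l : ℕ) (hl : 1 ≤ l) (ph : ℝ) (i : ℕ) : |alphB l ph i| ≤ 2 * wtB l i := by
  have hlpos : 0 < (l:ℝ) := by exact_mod_cast hl
  unfold alphB
  rw [abs_mul, abs_mul]
  have h1 : |(2:ℝ)/l| = 2/l := abs_of_pos (by positivity)
  have h2 : |wtB l i| = wtB l i := abs_of_nonneg (wtB_nonneg l i)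
  rw [h1, h2]
  have h3 : |∑ k ∈ range (l+1),
      wtB l k * (Real.cos ((k:ℝ) * ((i:ℝ) * π / l)) * Real.cos ((k:ℝ) * ph))| ≤ (l:ℝ) := by
    calc |∑ k ∈ range (l+1), wtB l k * (Real.cos ((k:ℝ) * ((i:ℝ) * π / l)) * Real.cos ((k:ℝ) * ph))|
        ≤ ∑ k ∈ range (l+1), |wtB l k * (Real.cos ((k:ℝ) * ((i:ℝ) * π / l)) * Real.cos ((k:ℝ) * ph))| :=
          Finset.abs_sum_le_sum_abs _ _
      _ ≤ ∑ k ∈ range (l+1), wtB l k := by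
          refine Finset.sum_le_sum (fun k _ => ?_)
          rw [abs_mul, abs_mul, abs_of_nonneg (wtB_nonneg l k)]
          calc wtB l k * (|Real.cos ((k:ℝ) * ((i:ℝ) * π / l))| * |Real.cos ((k:ℝ) * ph)|)
              ≤ wtB l k * (1 * 1) := by
                refine mul_le_mul_of_nonneg_left ?_ (wtB_nonneg l k)
                exact mul_le_mul (Real.abs_cos_le_one _) (Real.abs_cos_le_one _)
                  (abs_nonneg _) zero_le_one
            _ = wtB l k := by ring
      _ = l := sum_wtB l hl
  calc 2/(l:ℝ) * wtB l i * |∑ k ∈ range (l+1),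
        wtB l k * (Real.cos ((k:ℝ) * ((i:ℝ) * π / l)) * Real.cos ((k:ℝ) * ph))|
      ≤ 2/(l:ℝ) * wtB l i * l := by
        refine mul_le_mul_of_nonneg_left h3 ?_
        have := wtB_nonneg l i
        positivity
    _ = 2 * wtB l i := by field_simp

lemma sum_alphB_abs_le (l : ℕ) (hl : 1 ≤ l) (ph : ℝ) :
    ∑ i ∈ range (l+1), |alphB l ph i| ≤ 2 * l := by
  calc ∑ i ∈ range (l+1), |alphB l ph i| ≤ ∑ i ∈ range (l+1), 2 * wtB l i :=
        Finset.sum_le_sum (fun i _ => alphB_abs_le l hl ph i)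
    _ = 2 * ∑ i ∈ range (l+1), wtB l i := by rw [Finset.mul_sum]
    _ = 2 * l := by rw [sum_wtB l hl]

/-- reproduction of cosine generators -/
lemma repro_cos (l : ℕ) (hl : 1 ≤ l) (ph : ℝ) (m : ℕ) (hm : m ≤ l) :
    ∑ i ∈ range (l+1), alphB l ph i * Real.cos ((m:ℝ) * ((i:ℝ) * π / l))
      = Real.cos ((m:ℝ) * ph) := by
  have hlpos : 0 < (l:ℝ) := by exact_mod_cast hl
  unfold alphB
  have step1 : ∀ i ∈ range (l+1),
      ((2 / (l:ℝ)) * wtB l i * ∑ k ∈ range (l+1),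
        wtB l k * (Real.cos ((k:ℝ) * ((i:ℝ) * π / l)) * Real.cos ((k:ℝ) * ph)))
        * Real.cos ((m:ℝ) * ((i:ℝ) * π / l))
      = ∑ k ∈ range (l+1), (2 / (l:ℝ)) * wtB l k * Real.cos ((k:ℝ) * ph) *
          (wtB l i * (Real.cos ((k:ℝ) * ((i:ℝ) * π / l)) * Real.cos ((m:ℝ) * ((i:ℝ) * π / l)))) := by
    intro i _
    rw [Finset.mul_sum, Finset.sum_mul]
    refine Finset.sum_congr rfl (fun k _ => ?_)
    ring
  rw [Finset.sum_congr rfl step1, Finset.sum_comm]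
  have step2 : ∀ k ∈ range (l+1),
      ∑ i ∈ range (l+1), (2 / (l:ℝ)) * wtB l k * Real.cos ((k:ℝ) * ph) *
          (wtB l i * (Real.cos ((k:ℝ) * ((i:ℝ) * π / l)) * Real.cos ((m:ℝ) * ((i:ℝ) * π / l))))
      = (2 / (l:ℝ)) * wtB l k * Real.cos ((k:ℝ) * ph) *
          (if k = m then (if k = 0 ∨ k = l then (l:ℝ) else l/2) else 0) := by
    intro k hk
    rw [← Finset.mul_sum, Slem l k m hl (by simpa [Nat.lt_succ_iff] using hk) hm]
  rw [Finset.sum_congr rfl step2]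
  rw [Finset.sum_eq_single m]
  · rw [if_pos rfl]
    unfold wtB
    by_cases h0 : m = 0 ∨ m = l
    · rw [if_pos h0, if_pos h0]
      field_simp
    · rw [if_neg h0, if_neg h0]
      field_simp
  · intro k _ hkm
    rw [if_neg hkm, mul_zero]
  · intro hm'
    exfalso
    exact hm' (Finset.mem_range.mpr (by omega))



noncomputable def FB (k : ℕ) : ℝ → ℝ := fun ψ => Real.cos ((k:ℝ) * ψ)

def cosSet (M : ℕ) : Set (ℝ → ℝ) := {g | ∃ k ≤ M, g = FB k}

lemma FB_mem (M k : ℕ) (hk : k ≤ M) : FB k ∈ Submodule.span ℝ (cosSet M) :=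
  Submodule.subset_span ⟨k, hk, rfl⟩

lemma cosSet_mono {M M' : ℕ} (h : M ≤ M') :
    Submodule.span ℝ (cosSet M) ≤ Submodule.span ℝ (cosSet M') := by
  apply Submodule.span_mono
  rintro g ⟨k, hk, rfl⟩
  exact ⟨k, le_trans hk h, rfl⟩

lemma mul_cos_mem (M : ℕ) (f : ℝ → ℝ) (hf : f ∈ Submodule.span ℝ (cosSet M)) :
    (fun ψ => f ψ * Real.cos ψ) ∈ Submodule.span ℝ (cosSet (M+1)) := by
  induction hf using Submodule.span_induction with
  | mem g hg =>
    obtain ⟨k, hk, rfl⟩ := hg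
    rcases Nat.eq_zero_or_pos k with h0 | h0
    · subst h0
      have : (fun ψ => FB 0 ψ * Real.cos ψ) = FB 1 := by
        funext ψ; simp [FB]
      rw [this]
      exact FB_mem _ 1 (by omega)
    · have : (fun ψ => FB k ψ * Real.cos ψ)
          = (1/2 : ℝ) • FB (k+1) + (1/2 : ℝ) • FB (k-1) := by
        funext ψ
        simp only [Pi.add_apply, Pi.smul_apply, smul_eq_mul, FB]
        have h1 : ((k+1:ℕ):ℝ) * ψ = (k:ℝ)*ψ + ψ := by push_cast; ring
        have h2 : ((k-1:ℕ):ℝ) * ψ = (k:ℝ)*ψ - ψ := by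
          rw [Nat.cast_sub h0]; push_cast; ring
        rw [h1, h2, Real.cos_add, Real.cos_sub]
        ring
      rw [this]
      exact Submodule.add_mem _ (Submodule.smul_mem _ _ (FB_mem _ _ (by omega)))
        (Submodule.smul_mem _ _ (FB_mem _ _ (by omega)))
  | zero =>
    have : (fun ψ => (0:ℝ→ℝ) ψ * Real.cos ψ) = 0 := by funext ψ; simp
    rw [this]; exact Submodule.zero_mem _
  | add u v hu hv ihu ihv =>
    have : (fun ψ => (u+v) ψ * Real.cos ψ)
        = (fun ψ => u ψ * Real.cos ψ) + (fun ψ => v ψ * Real.cos ψ) := by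
      funext ψ; simp [add_mul]
    rw [this]; exact Submodule.add_mem _ ihu ihv
  | smul c u hu ihu =>
    have : (fun ψ => (c • u) ψ * Real.cos ψ) = c • (fun ψ => u ψ * Real.cos ψ) := by
      funext ψ; simp [mul_assoc]
    rw [this]; exact Submodule.smul_mem _ _ ihu

lemma cos_pow_mem (m : ℕ) : (fun ψ => Real.cos ψ ^ m) ∈ Submodule.span ℝ (cosSet m) := by
  induction m with
  | zero =>
    have : (fun ψ : ℝ => Real.cos ψ ^ 0) = FB 0 := by funext ψ; simp [FB]
    rw [this]; exact FB_mem 0 0 le_rfl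
  | succ n ih =>
    have : (fun ψ : ℝ => Real.cos ψ ^ (n+1)) = (fun ψ => Real.cos ψ ^ n * Real.cos ψ) := by
      funext ψ; ring
    rw [this]
    exact mul_cos_mem n _ ih


lemma repro_span (l : ℕ) (hl : 1 ≤ l) (ph : ℝ) (f : ℝ → ℝ)
    (hf : f ∈ Submodule.span ℝ (cosSet l)) :
    ∑ i ∈ range (l+1), alphB l ph i * f ((i:ℝ) * π / l) = f ph := by
  induction hf using Submodule.span_induction with
  | mem g hg =>
    obtain ⟨k, hk, rfl⟩ := hg
    exact repro_cos l hl ph k hk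
  | zero => simp
  | add u v hu hv ihu ihv =>
    simp only [Pi.add_apply, mul_add, Finset.sum_add_distrib, ihu, ihv]
  | smul c u hu ihu =>
    simp only [Pi.smul_apply, smul_eq_mul]
    rw [← ihu, Finset.mul_sum]
    refine Finset.sum_congr rfl (fun i _ => by ring)



lemma powDivFactLeExp (s : ℝ) (hs : 0 ≤ s) (N : ℕ) :
    s ^ N / N ! ≤ Real.exp s := by
  have h := Real.sum_le_exp_of_nonneg hs (N+1)
  refine le_trans ?_ h
  have : s ^ N / N ! = ∑ i ∈ range (N+1), if i = N then s ^ i / i ! else 0 := by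
    rw [Finset.sum_ite_eq' (range (N+1)) N (fun i => s ^ i / i !)]
    simp
  rw [this]
  refine Finset.sum_le_sum (fun i _ => ?_)
  split
  · exact le_refl _
  · positivity

lemma exp_tail (x : ℝ) (N : ℕ) :
    |Real.exp x - ∑ m ∈ range N, x ^ m / m !| ≤ |x| ^ N / N ! * Real.exp |x| := by
  have hs : Summable (fun m : ℕ => x ^ m / m !) := Real.summable_pow_div_factorial x
  have hexp : Real.exp x = ∑' m : ℕ, x ^ m / m ! := by
    rw [Real.exp_eq_exp_ℝ, NormedSpace.exp_eq_tsum_div]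
  have hsplit := Summable.sum_add_tsum_nat_add N hs
  have htail : Real.exp x - ∑ m ∈ range N, x ^ m / m !
      = ∑' m : ℕ, x ^ (m + N) / (m + N)! := by
    rw [hexp, ← hsplit]; ring
  rw [htail]
  have hsa : Summable (fun m : ℕ => |x| ^ (m + N) / (m + N)!) :=
    (summable_nat_add_iff N).mpr (Real.summable_pow_div_factorial |x|)
  have habs : |∑' m : ℕ, x ^ (m + N) / (m + N)!| ≤ ∑' m : ℕ, |x| ^ (m + N) / (m + N)! := by
    have h1 : ‖∑' m : ℕ, x ^ (m + N) / (m + N)!‖ ≤ ∑' m : ℕ, ‖x ^ (m + N) / (m + N)!‖ :=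
      norm_tsum_le_tsum_norm (by simpa [Real.norm_eq_abs, abs_div, abs_pow] using hsa)
    simpa [Real.norm_eq_abs, abs_div, abs_pow] using h1
  refine le_trans habs ?_
  calc (∑' m : ℕ, |x| ^ (m + N) / (m + N)!)
      ≤ ∑' m : ℕ, |x| ^ N / N ! * (|x| ^ m / m !) := by
        refine Summable.tsum_le_tsum (fun m => ?_) hsa ?_
        · have hfact : (N ! : ℝ) * m ! ≤ ((m+N)! : ℝ) := by
            have hdvd := Nat.factorial_mul_factorial_dvd_factorial_add N m
            have hle : N ! * m ! ≤ (N + m)! := Nat.le_of_dvd (Nat.factorial_pos _) hdvd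
            have hcomm : N + m = m + N := by omega
            rw [hcomm] at hle
            exact_mod_cast hle
          rw [pow_add]
          rw [div_le_iff₀ (by positivity)]
          have expand : |x| ^ N / N ! * (|x| ^ m / m !) * ((m+N)! : ℝ)
              = (|x| ^ N * |x| ^ m) * (((m+N)! : ℝ) / ((N ! : ℝ) * m !)) := by
            field_simp
          rw [expand]
          have h1 : (1:ℝ) ≤ ((m+N)! : ℝ) / ((N ! : ℝ) * m !) := by
            rw [le_div_iff₀ (by positivity)]
            linarith
          nlinarith [pow_nonneg (abs_nonneg x) N, pow_nonneg (abs_nonneg x) m,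
            mul_nonneg (pow_nonneg (abs_nonneg x) N) (pow_nonneg (abs_nonneg x) m)]
        · exact (Real.summable_pow_div_factorial |x|).mul_left _
    _ = |x| ^ N / N ! * Real.exp |x| := by
        rw [tsum_mul_left]
        congr 1
        rw [Real.exp_eq_exp_ℝ, NormedSpace.exp_eq_tsum_div]

lemma master_err (l : ℕ) (hl : 1 ≤ l) (c hh T y : ℝ) (hhh : 0 < hh) (hT : 0 ≤ T)
    (hy : y ∈ Set.Icc (c - hh) (c + hh)) :
    |Real.exp (-(y*T)) - ∑ i ∈ range (l+1),
        alphB l (Real.arccos ((y - c)/hh)) i * Real.exp (-(c + hh * Real.cos ((i:ℝ) * π / l)) * T)|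
      ≤ (2*(l:ℝ)+1) * (Real.exp (-((c - hh)*T)) * (T*hh)^(l+1) / (l+1)!) := by
  obtain ⟨hy1, hy2⟩ := hy
  set u : ℝ := (y - c)/hh with hu_def
  have hu1 : -1 ≤ u := by
    rw [hu_def, le_div_iff₀ hhh]; linarith
  have hu2 : u ≤ 1 := by
    rw [hu_def, div_le_iff₀ hhh]; linarith
  set ph : ℝ := Real.arccos u with hph_def
  have hcosph : Real.cos ph = u := Real.cos_arccos hu1 hu2
  have hy_eq : y = c + hh * Real.cos ph := by
    rw [hcosph, hu_def]; field_simp; ring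
  set δ0 : ℝ := Real.exp (-((c - hh)*T)) * (T*hh)^(l+1) / (l+1)! with hδ0_def
  set d : ℕ → ℝ := fun m => Real.exp (-(c*T)) * (-(T*hh))^m / m ! with hd_def
  set P : ℝ → ℝ := fun ψ => ∑ m ∈ range (l+1), d m * Real.cos ψ ^ m with hP_def
  -- P is in the span of cosines
  have hPmem : P ∈ Submodule.span ℝ (cosSet l) := by
    have : P = ∑ m ∈ range (l+1), d m • (fun ψ => Real.cos ψ ^ m) := by
      funext ψ
      rw [hP_def]
      simp [Finset.sum_apply]
    rw [this]
    refine Submodule.sum_mem _ (fun m hm => ?_)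
    refine Submodule.smul_mem _ _ ?_
    exact cosSet_mono (by simpa [Nat.lt_succ_iff] using hm) (cos_pow_mem m)
  -- pointwise Taylor bound
  have hkey : ∀ ψ : ℝ, |Real.exp (-(c + hh * Real.cos ψ) * T) - P ψ| ≤ δ0 := by
    intro ψ
    set z : ℝ := -(T * hh * Real.cos ψ) with hz_def
    have he : Real.exp (-(c + hh * Real.cos ψ) * T) = Real.exp (-(c*T)) * Real.exp z := by
      rw [← Real.exp_add]
      congr 1
      rw [hz_def]; ring
    have hP : P ψ = Real.exp (-(c*T)) * ∑ m ∈ range (l+1), z ^ m / m ! := by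
      rw [hP_def, Finset.mul_sum]
      refine Finset.sum_congr rfl (fun m _ => ?_)
      rw [hd_def]
      have : z ^ m = (-(T*hh))^m * Real.cos ψ ^ m := by
        rw [← mul_pow, hz_def]; ring_nf
      rw [this]; ring
    rw [he, hP, ← mul_sub, abs_mul, abs_of_nonneg (Real.exp_nonneg _)]
    have htail := exp_tail z (l+1)
    have hzabs : |z| ≤ T * hh := by
      rw [hz_def, abs_neg, abs_mul, abs_of_nonneg (by positivity : (0:ℝ) ≤ T * hh)]
      calc T * hh * |Real.cos ψ| ≤ T * hh * 1 :=
            mul_le_mul_of_nonneg_left (Real.abs_cos_le_one ψ) (by positivity)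
        _ = T * hh := by ring
    have h2 : |z| ^ (l+1) / (l+1)! * Real.exp |z| ≤ (T*hh) ^ (l+1) / (l+1)! * Real.exp (T*hh) := by
      have ha : |z| ^ (l+1) ≤ (T*hh) ^ (l+1) := pow_le_pow_left₀ (abs_nonneg z) hzabs (l+1)
      have hb : Real.exp |z| ≤ Real.exp (T*hh) := Real.exp_le_exp.mpr hzabs
      have hfp : (0:ℝ) < (l+1)! := by exact_mod_cast Nat.factorial_pos (l+1)
      calc |z| ^ (l+1) / (l+1)! * Real.exp |z| ≤ (T*hh) ^ (l+1) / (l+1)! * Real.exp |z| := by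
            gcongr
        _ ≤ (T*hh) ^ (l+1) / (l+1)! * Real.exp (T*hh) := by
            apply mul_le_mul_of_nonneg_left hb (by positivity)
    calc Real.exp (-(c*T)) * |Real.exp z - ∑ m ∈ range (l+1), z ^ m / m !|
        ≤ Real.exp (-(c*T)) * ((T*hh) ^ (l+1) / (l+1)! * Real.exp (T*hh)) := by
          apply mul_le_mul_of_nonneg_left (le_trans htail h2) (Real.exp_nonneg _)
      _ = δ0 := by
          rw [hδ0_def]
          rw [show -((c-hh)*T) = -(c*T) + T*hh by ring, Real.exp_add]
          ring
  have hδ0_nonneg : 0 ≤ δ0 := by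
    rw [hδ0_def]
    positivity
  -- reproduction
  have hrepro : ∑ i ∈ range (l+1), alphB l ph i * P ((i:ℝ) * π / l) = P ph :=
    repro_span l hl ph P hPmem
  -- final assembly
  have split : Real.exp (-(y*T)) - ∑ i ∈ range (l+1),
        alphB l ph i * Real.exp (-(c + hh * Real.cos ((i:ℝ) * π / l)) * T)
      = (Real.exp (-(c + hh * Real.cos ph) * T) - P ph)
        + ∑ i ∈ range (l+1), alphB l ph i *
            (P ((i:ℝ) * π / l) - Real.exp (-(c + hh * Real.cos ((i:ℝ) * π / l)) * T)) := by
    have h1 : Real.exp (-(y*T)) = Real.exp (-(c + hh * Real.cos ph) * T) := by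
      rw [← hy_eq]; ring_nf
    have h2 : ∑ i ∈ range (l+1), alphB l ph i *
            (P ((i:ℝ) * π / l) - Real.exp (-(c + hh * Real.cos ((i:ℝ) * π / l)) * T))
        = P ph - ∑ i ∈ range (l+1),
            alphB l ph i * Real.exp (-(c + hh * Real.cos ((i:ℝ) * π / l)) * T) := by
      rw [← hrepro, ← Finset.sum_sub_distrib]
      refine Finset.sum_congr rfl (fun i _ => by ring)
    rw [h1, h2]
    ring
  rw [split]
  calc |(Real.exp (-(c + hh * Real.cos ph) * T) - P ph)
        + ∑ i ∈ range (l+1), alphB l ph i *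
            (P ((i:ℝ) * π / l) - Real.exp (-(c + hh * Real.cos ((i:ℝ) * π / l)) * T))|
      ≤ |Real.exp (-(c + hh * Real.cos ph) * T) - P ph|
        + |∑ i ∈ range (l+1), alphB l ph i *
            (P ((i:ℝ) * π / l) - Real.exp (-(c + hh * Real.cos ((i:ℝ) * π / l)) * T))| :=
        abs_add_le _ _
    _ ≤ δ0 + 2*(l:ℝ) * δ0 := by
        refine add_le_add (hkey ph) ?_
        calc |∑ i ∈ range (l+1), alphB l ph i *
              (P ((i:ℝ) * π / l) - Real.exp (-(c + hh * Real.cos ((i:ℝ) * π / l)) * T))|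
            ≤ ∑ i ∈ range (l+1), |alphB l ph i *
              (P ((i:ℝ) * π / l) - Real.exp (-(c + hh * Real.cos ((i:ℝ) * π / l)) * T))| :=
              Finset.abs_sum_le_sum_abs _ _
          _ ≤ ∑ i ∈ range (l+1), |alphB l ph i| * δ0 := by
              refine Finset.sum_le_sum (fun i _ => ?_)
              rw [abs_mul]
              refine mul_le_mul_of_nonneg_left ?_ (abs_nonneg _)
              rw [abs_sub_comm]
              exact hkey _
          _ = (∑ i ∈ range (l+1), |alphB l ph i|) * δ0 := by rw [Finset.sum_mul]
          _ ≤ 2*(l:ℝ) * δ0 := mul_le_mul_of_nonneg_right (sum_alphB_abs_le l hl ph) hδ0_nonneg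
    _ = (2*(l:ℝ)+1) * δ0 := by ring

/-- Bucket sparsification: nodes in a bucket can be replaced by the (fixed)
exponentiated Chebyshev nodes of the corresponding interval, with signed coefficients of small
total mass, at entrywise error `ε·w`. -/
theorem bucket_sparsification :
    ∃ C : ℝ, 0 < C ∧
      ∀ (n : ℕ), 2 ≤ n → ∀ ε : ℝ, 0 < ε → ε < 1 / 2 →
        ∀ lam : ℝ, lam = 2 * Real.log (1 / ε) →
          ∀ l : ℕ, l = ⌈C * Real.log (1 / ε)⌉₊ →
            ∀ r : ℕ, (2 : ℝ) ^ r * lam / n ≤ Real.log (10 / 9) →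
              ∀ aI bI : ℝ,
                aI = (if r = 0 then 0 else (2 : ℝ) ^ (r - 1) * lam / n) →
                bI = (2 : ℝ) ^ r * lam / n →
                ∀ (B : Finset ℝ) (a : ℝ → ℝ),
                  (∀ x ∈ B, x ≠ 0) → (∀ x ∈ B, 0 < a x) →
                  (∀ x ∈ B, Real.log (1 / |x|) ∈ Set.Icc aI bI) →
                  ∀ w : ℝ, w = ∑ x ∈ B, a x →
                    ∃ ap am : Fin (l + 1) → ℝ,
                      (∑ i, (|ap i| + |am i|)) ≤ C * l * w ∧
                      ∀ t : ℕ, t ≤ 2 * n - 2 →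
                        |(∑ x ∈ B, a x * x ^ t)
                            - (∑ i : Fin (l + 1),
                                ap i * Real.exp (-(chebNode aI bI l (i : ℕ)) * t))
                            - (-1 : ℝ) ^ t * (∑ i : Fin (l + 1),
                                am i * Real.exp (-(chebNode aI bI l (i : ℕ)) * t))| ≤ ε * w := by
  refine ⟨200, by norm_num, ?_⟩
  intro n hn ε hε hε2 lam hlam l hldef r hr aI bI haI hbI B a hB0 hBa hBI w hw
  -- basic facts
  set L : ℝ := Real.log (1/ε) with hL_def
  have hlog2 : (0.6931:ℝ) < Real.log 2 := by
    have := Real.log_two_gt_d9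
    linarith
  have hL2 : Real.log 2 ≤ L := by
    rw [hL_def]
    apply Real.log_le_log (by norm_num)
    rw [le_div_iff₀ hε]
    linarith
  have hLpos : 0 < L := lt_of_lt_of_le (by linarith) hL2
  have hl_ge : (200:ℝ)*L ≤ l := by rw [hldef]; exact Nat.le_ceil _
  have hl_le : (l:ℝ) ≤ 200*L + 1 := by
    rw [hldef]
    have := Nat.ceil_lt_add_one (by positivity : (0:ℝ) ≤ 200 * L)
    exact le_of_lt this
  have hl1 : 1 ≤ l := by
    rw [hldef]
    exact Nat.one_le_iff_ne_zero.mpr (by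
      intro h
      have := Nat.ceil_eq_zero.mp h
      have h200 : (0:ℝ) < 200 * L := by positivity
      linarith)
  have hnpos : 0 < (n:ℝ) := by positivity
  have hlampos : 0 < lam := by rw [hlam]; positivity
  have hwpos : 0 ≤ w := by
    rw [hw]; exact Finset.sum_nonneg (fun x hx => le_of_lt (hBa x hx))
  set cc : ℝ := (aI + bI)/2 with hcc_def
  set hh : ℝ := (bI - aI)/2 with hhh_def
  -- interval facts
  have hinterval : 0 < hh ∧ aI = cc - hh ∧ bI = cc + hh ∧ 0 ≤ aI := by
    refine ⟨?_, by rw [hcc_def, hhh_def]; ring, by rw [hcc_def, hhh_def]; ring, ?_⟩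
    · rw [hhh_def]
      rcases Nat.eq_zero_or_pos r with hr0 | hrpos
      · rw [haI, hbI, if_pos hr0, hr0]
        simp only [pow_zero, one_mul]
        have hq : 0 < lam/(n:ℝ) := by positivity
        linarith
      · rw [haI, hbI, if_neg (Nat.pos_iff_ne_zero.mp hrpos)]
        have h2r : (2:ℝ)^r = 2 * 2^(r-1) := by
          conv_lhs => rw [show r = (r-1)+1 from by omega]
          rw [pow_succ]
          ring
        rw [h2r]
        have hq : (0:ℝ) < 2^(r-1) * lam / n := by positivity
        have he : (2 * (2:ℝ)^(r-1) * lam / n - 2^(r-1)*lam/n)/2 = (2^(r-1)*lam/n)/2 := by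
          ring
        rw [he]
        linarith
    · rcases Nat.eq_zero_or_pos r with hr0 | hrpos
      · rw [haI, if_pos hr0]
      · rw [haI, if_neg (Nat.pos_iff_ne_zero.mp hrpos)]
        positivity
  obtain ⟨hhpos, haIcc, hbIcc, haInn⟩ := hinterval
  -- the error bound
  have herr : ∀ t : ℕ, t ≤ 2*n - 2 →
      (2*(l:ℝ)+1) * (Real.exp (-(aI*(t:ℝ))) * ((t:ℝ)*hh)^(l+1) / (l+1)!) ≤ ε := by
    intro t ht
    set T : ℝ := (t:ℝ) with hT_def
    have hT : 0 ≤ T := by positivity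
    have hTn : T ≤ 2*(n:ℝ) := by
      rw [hT_def]
      have : t ≤ 2*n := by omega
      exact_mod_cast le_trans (Nat.cast_le.mpr this) (by push_cast; linarith)
    -- step A : core ≤ (1/2)^(l+1) * exp (2*lam)
    have hstepA : Real.exp (-(aI*T)) * (T*hh)^(l+1) / (l+1)!
        ≤ (1/2:ℝ)^(l+1) * Real.exp (2*lam) := by
      rcases Nat.eq_zero_or_pos r with hr0 | hrpos
      · -- r = 0 : aI = 0, hh = lam/(2n)
        have haI0 : aI = 0 := by rw [haI, if_pos hr0]
        have hhh2 : hh = lam/(2*n) := by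
          rw [hhh_def, hbI, haI0, hr0]
          simp only [pow_zero, one_mul]
          ring
        have hThh : T*hh ≤ lam := by
          rw [hhh2]
          calc T * (lam / (2*(n:ℝ))) ≤ (2*n) * (lam/(2*n)) := by
                apply mul_le_mul_of_nonneg_right hTn (by positivity)
            _ = lam := by field_simp
        have hThh0 : 0 ≤ T*hh := by positivity
        rw [haI0]
        simp only [zero_mul, neg_zero, Real.exp_zero, one_mul]
        calc (T*hh)^(l+1) / ((l+1)! : ℝ)
            ≤ lam^(l+1) / ((l+1)! : ℝ) := by
              gcongr
          _ = (1/2:ℝ)^(l+1) * ((2*lam)^(l+1) / ((l+1)! : ℝ)) := by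
              rw [← mul_div_assoc, ← mul_pow,
                show (1/2:ℝ)*(2*lam) = lam from by ring]
          _ ≤ (1/2:ℝ)^(l+1) * Real.exp (2*lam) := by
              apply mul_le_mul_of_nonneg_left _ (by positivity)
              exact powDivFactLeExp (2*lam) (by positivity) (l+1)
      · -- r ≥ 1 : hh = aI/2
        have hbI2 : bI = 2*aI := by
          rw [haI, hbI, if_neg (Nat.pos_iff_ne_zero.mp hrpos)]
          rw [show r = (r-1)+1 by omega, pow_succ]
          rw [show (r-1+1)-1 = r-1 by omega]
          ring
        have hhh2 : hh = aI/2 := by rw [hhh_def, hbI2]; ring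
        set s : ℝ := T * aI with hs_def
        have hs0 : 0 ≤ s := by
          rw [hs_def]
          exact mul_nonneg hT haInn
        have hThh : T*hh = s/2 := by rw [hhh2, hs_def]; ring
        have hexp : Real.exp (-(aI*T)) = Real.exp (-s) := by
          rw [hs_def]; ring_nf
        rw [hThh, hexp]
        have key : Real.exp (-s) * (s/2)^(l+1) / ((l+1)! : ℝ)
            = (1/2:ℝ)^(l+1) * (s^(l+1)/((l+1)! : ℝ) * Real.exp (-s)) := by
          rw [div_pow, div_pow]
          have hfp : ((l+1)! : ℝ) ≠ 0 := by positivity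
          field_simp
          ring
        rw [key]
        apply mul_le_mul_of_nonneg_left _ (by positivity)
        calc s^(l+1)/((l+1)! : ℝ) * Real.exp (-s)
            ≤ Real.exp s * Real.exp (-s) := by
              apply mul_le_mul_of_nonneg_right
                (powDivFactLeExp s hs0 (l+1)) (Real.exp_nonneg _)
          _ = 1 := by rw [← Real.exp_add]; simp
          _ ≤ Real.exp (2*lam) := Real.one_le_exp (by positivity)
    -- step B : (2l+1) * (1/2)^(l+1) * exp(2*lam) ≤ ε
    have hhalf : (1/2:ℝ)^(l+1) = Real.exp (-((l+1:ℝ) * Real.log 2)) := by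
      have h2 : Real.exp ((l+1:ℝ) * Real.log 2) = 2^(l+1) := by
        rw [show ((l+1:ℝ)) = ((l+1:ℕ):ℝ) from by push_cast; ring,
          Real.exp_nat_mul, Real.exp_log (by norm_num : (0:ℝ) < 2)]
      rw [Real.exp_neg, h2, div_pow, one_pow, one_div]
    have hfac1 : (2*(l:ℝ)+1) ≤ Real.exp (10*L) := by
      have h1 : (2*(l:ℝ)+1) ≤ 405 * L := by
        have : (2:ℝ)*(200*L+1)+1 = 400*L + 3 := by ring
        nlinarith [hL2, hlog2]
      have h2 : (405:ℝ) ≤ Real.exp (9*L) := by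
        have h512 : Real.exp (9*L) ≥ 2^(9:ℕ) := by
          have : (2:ℝ)^(9:ℕ) = Real.exp ((9:ℕ) * Real.log 2) := by
            rw [Real.exp_nat_mul, Real.exp_log (by norm_num : (0:ℝ) < 2)]
          rw [this]
          apply Real.exp_le_exp.mpr
          push_cast
          nlinarith [hL2, hlog2]
        norm_num at h512
        linarith
      have h3 : L ≤ Real.exp L := le_trans (by linarith) (Real.add_one_le_exp L)
      calc (2*(l:ℝ)+1) ≤ 405 * L := h1
        _ ≤ Real.exp (9*L) * Real.exp L := by
            apply mul_le_mul h2 h3 (le_of_lt hLpos) (Real.exp_nonneg _)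
        _ = Real.exp (10*L) := by rw [← Real.exp_add]; ring_nf
    have hfac2 : Real.exp (-((l+1:ℝ) * Real.log 2)) ≤ Real.exp (-(138*L)) := by
      apply Real.exp_le_exp.mpr
      have : 138*L ≤ (l+1:ℝ) * Real.log 2 := by
        have hll : (200:ℝ)*L ≤ (l:ℝ)+1 := by linarith
        nlinarith [hlog2, hLpos, hL2]
      linarith
    have hexplam : Real.exp (2*lam) = Real.exp (4*L) := by rw [hlam]; ring_nf
    have hfinal : Real.exp (10*L) * Real.exp (-(138*L)) * Real.exp (4*L) ≤ ε := by
      rw [← Real.exp_add, ← Real.exp_add]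
      have harg : 10*L + -(138*L) + 4*L = -(124*L) := by ring
      rw [harg]
      have : Real.exp (-(124*L)) ≤ Real.exp (-L) := by
        apply Real.exp_le_exp.mpr
        linarith
      have heps : Real.exp (-L) = ε := by
        rw [hL_def, one_div, Real.log_inv, neg_neg, Real.exp_log hε]
      linarith [this, heps.le, heps.ge]
    calc (2*(l:ℝ)+1) * (Real.exp (-(aI*T)) * (T*hh)^(l+1) / (l+1)!)
        ≤ (2*(l:ℝ)+1) * ((1/2:ℝ)^(l+1) * Real.exp (2*lam)) := by
          apply mul_le_mul_of_nonneg_left hstepA (by positivity)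
      _ = (2*(l:ℝ)+1) * Real.exp (-((l+1:ℝ) * Real.log 2)) * Real.exp (2*lam) := by
          rw [hhalf]; ring
      _ ≤ Real.exp (10*L) * Real.exp (-(138*L)) * Real.exp (4*L) := by
          rw [hexplam]
          apply mul_le_mul_of_nonneg_right _ (Real.exp_nonneg _)
          apply mul_le_mul hfac1 hfac2 (Real.exp_nonneg _) (Real.exp_nonneg _)
      _ ≤ ε := hfinal
  
  classical
  -- coefficient functionals per point
  set ph : ℝ → ℝ := fun x => Real.arccos ((Real.log (1/|x|) - cc)/hh) with hph_def
  set A : ℝ → ℕ → ℝ := fun x j => alphB l (ph x) j with hA_def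
  set Bp := B.filter (fun x => 0 < x) with hBp_def
  set Bm := B.filter (fun x => ¬ 0 < x) with hBm_def
  have hBpB : Bp ⊆ B := Finset.filter_subset _ _
  have hBmB : Bm ⊆ B := Finset.filter_subset _ _
  set apN : ℕ → ℝ := fun j => ∑ x ∈ Bp, a x * A x j with hapN_def
  set amN : ℕ → ℝ := fun j => ∑ x ∈ Bm, a x * A x j with hamN_def
  have hsum_split : ∑ x ∈ Bp, a x + ∑ x ∈ Bm, a x = w := by
    rw [hw, hBp_def, hBm_def]
    exact Finset.sum_filter_add_sum_filter_not B _ a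
  have haby : ∀ x : ℝ, ∑ j ∈ range (l+1), |A x j| ≤ 2*l :=
    fun x => sum_alphB_abs_le l hl1 _
  refine ⟨fun i => apN (i:ℕ), fun i => amN (i:ℕ), ?_, ?_⟩
  · -- coefficient bound
    rw [Fin.sum_univ_eq_sum_range (fun j => |apN j| + |amN j|) (l+1)]
    have hbound : ∀ S : Finset ℝ, S ⊆ B →
        ∑ j ∈ range (l+1), |∑ x ∈ S, a x * A x j| ≤ (∑ x ∈ S, a x) * (2*l) := by
      intro S hS
      calc ∑ j ∈ range (l+1), |∑ x ∈ S, a x * A x j|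
          ≤ ∑ j ∈ range (l+1), ∑ x ∈ S, a x * |A x j| := by
            refine Finset.sum_le_sum fun j _ => ?_
            calc |∑ x ∈ S, a x * A x j| ≤ ∑ x ∈ S, |a x * A x j| :=
                  Finset.abs_sum_le_sum_abs _ _
              _ = ∑ x ∈ S, a x * |A x j| := by
                  refine Finset.sum_congr rfl fun x hx => ?_
                  rw [abs_mul, abs_of_pos (hBa x (hS hx))]
        _ = ∑ x ∈ S, a x * (∑ j ∈ range (l+1), |A x j|) := by
            rw [Finset.sum_comm]
            exact Finset.sum_congr rfl fun x _ => (Finset.mul_sum _ _ _).symm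
        _ ≤ ∑ x ∈ S, a x * (2*l) := by
            refine Finset.sum_le_sum fun x hx => ?_
            exact mul_le_mul_of_nonneg_left (haby x) (le_of_lt (hBa x (hS hx)))
        _ = (∑ x ∈ S, a x) * (2*l) := by rw [← Finset.sum_mul]
    calc ∑ j ∈ range (l+1), (|apN j| + |amN j|)
        = (∑ j ∈ range (l+1), |apN j|) + (∑ j ∈ range (l+1), |amN j|) :=
          Finset.sum_add_distrib
      _ ≤ (∑ x ∈ Bp, a x) * (2*l) + (∑ x ∈ Bm, a x) * (2*l) :=
          add_le_add (hbound Bp hBpB) (hbound Bm hBmB)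
      _ = w * (2*l) := by rw [← add_mul, hsum_split]
      _ ≤ 200 * l * w := by nlinarith [hwpos, Nat.cast_nonneg (α := ℝ) l]
  · -- error bound
    intro t ht
    set T : ℝ := (t:ℝ) with hT_def
    have hT : 0 ≤ T := Nat.cast_nonneg t
    set E : ℕ → ℝ := fun j => Real.exp (-(cc + hh * Real.cos ((j:ℝ) * π / l)) * T) with hE_def
    have hcheb : ∀ j : ℕ, chebNode aI bI l j = cc + hh * Real.cos ((j:ℝ) * π / l) := by
      intro j
      simp only [chebNode, hcc_def, hhh_def]
    set Ex : ℝ → ℝ := fun x => Real.exp (-(Real.log (1/|x|) * T)) with hEx_def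
    set Gx : ℝ → ℝ := fun x => ∑ j ∈ range (l+1), A x j * E j with hGx_def
    -- per-point error
    have hperx : ∀ x ∈ B, |Ex x - Gx x| ≤ ε := by
      intro x hx
      have hmem := hBI x hx
      rw [haIcc, hbIcc] at hmem
      have h1 := master_err l hl1 cc hh T (Real.log (1/|x|)) hhpos hT hmem
      have h2 : (2*(l:ℝ)+1) * (Real.exp (-((cc - hh)*T)) * (T*hh)^(l+1) / (l+1)!) ≤ ε := by
        rw [← haIcc]
        exact herr t ht
      exact le_trans h1 h2
    -- power identities
    have hxpow_p : ∀ x ∈ Bp, (x:ℝ)^t = Ex x := by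
      intro x hx
      have hx0 : 0 < x := (Finset.mem_filter.mp hx).2
      rw [hEx_def]
      simp only
      rw [abs_of_pos hx0, one_div, Real.log_inv]
      rw [show -(-Real.log x * T) = (t:ℝ) * Real.log x from by rw [hT_def]; ring]
      rw [Real.exp_nat_mul, Real.exp_log hx0]
    have hxpow_m : ∀ x ∈ Bm, (x:ℝ)^t = (-1:ℝ)^t * Ex x := by
      intro x hx
      have hxB := (Finset.mem_filter.mp hx).1
      have hx0 : x < 0 := by
        rcases lt_trichotomy x 0 with h | h | h
        · exact h
        · exact absurd h (hB0 x hxB)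
        · exact absurd h (Finset.mem_filter.mp hx).2
      have habs : |x| = -x := abs_of_neg hx0
      have habs0 : 0 < |x| := abs_pos.mpr (hB0 x hxB)
      have hxeq : x = -|x| := by rw [habs]; ring
      rw [hEx_def]
      simp only
      rw [one_div, Real.log_inv]
      rw [show -(-Real.log |x| * T) = (t:ℝ) * Real.log |x| from by rw [hT_def]; ring]
      rw [Real.exp_nat_mul, Real.exp_log habs0]
      calc x^t = (-|x|)^t := by rw [← hxeq]
        _ = (-1:ℝ)^t * |x|^t := by rw [neg_pow]
    -- rewrite the Fin sums
    have hfin1 : (∑ i : Fin (l+1), apN (i:ℕ) * Real.exp (-(chebNode aI bI l (i:ℕ)) * T))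
        = ∑ j ∈ range (l+1), apN j * E j := by
      rw [Fin.sum_univ_eq_sum_range (fun j => apN j * Real.exp (-(chebNode aI bI l j) * T)) (l+1)]
      exact Finset.sum_congr rfl fun j _ => by rw [hcheb j]
    have hfin2 : (∑ i : Fin (l+1), amN (i:ℕ) * Real.exp (-(chebNode aI bI l (i:ℕ)) * T))
        = ∑ j ∈ range (l+1), amN j * E j := by
      rw [Fin.sum_univ_eq_sum_range (fun j => amN j * Real.exp (-(chebNode aI bI l j) * T)) (l+1)]
      exact Finset.sum_congr rfl fun j _ => by rw [hcheb j]
    -- swap sums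
    have hswap : ∀ S : Finset ℝ, ∑ j ∈ range (l+1), (∑ x ∈ S, a x * A x j) * E j
        = ∑ x ∈ S, a x * Gx x := by
      intro S
      calc ∑ j ∈ range (l+1), (∑ x ∈ S, a x * A x j) * E j
          = ∑ j ∈ range (l+1), ∑ x ∈ S, a x * A x j * E j := by
            exact Finset.sum_congr rfl fun j _ => Finset.sum_mul _ _ _
        _ = ∑ x ∈ S, ∑ j ∈ range (l+1), a x * A x j * E j := Finset.sum_comm
        _ = ∑ x ∈ S, a x * Gx x := by
            refine Finset.sum_congr rfl fun x _ => ?_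
            rw [hGx_def]
            simp only
            rw [Finset.mul_sum]
            exact Finset.sum_congr rfl fun j _ => by ring
    -- split the main sum
    have hsplitB : ∑ x ∈ B, a x * x^t = ∑ x ∈ Bp, a x * x^t + ∑ x ∈ Bm, a x * x^t := by
      rw [hBp_def, hBm_def]
      exact (Finset.sum_filter_add_sum_filter_not B _ _).symm
    have hEq1 : ∑ x ∈ Bp, a x * x^t = ∑ x ∈ Bp, a x * Ex x :=
      Finset.sum_congr rfl fun x hx => by rw [hxpow_p x hx]
    have hEq2 : ∑ x ∈ Bm, a x * x^t = (-1:ℝ)^t * ∑ x ∈ Bm, a x * Ex x := by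
      rw [Finset.mul_sum]
      exact Finset.sum_congr rfl fun x hx => by rw [hxpow_m x hx]; ring
    -- the key decomposition
    have hkeyS : (∑ x ∈ B, a x * x ^ t)
          - (∑ j ∈ range (l+1), apN j * E j)
          - (-1:ℝ)^t * (∑ j ∈ range (l+1), amN j * E j)
        = (∑ x ∈ Bp, a x * (Ex x - Gx x))
          + (-1:ℝ)^t * (∑ x ∈ Bm, a x * (Ex x - Gx x)) := by
      rw [hsplitB, hEq1, hEq2, hapN_def, hamN_def]
      simp only
      rw [hswap Bp, hswap Bm]
      have e1 : ∑ x ∈ Bp, a x * (Ex x - Gx x)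
          = ∑ x ∈ Bp, a x * Ex x - ∑ x ∈ Bp, a x * Gx x := by
        rw [← Finset.sum_sub_distrib]
        exact Finset.sum_congr rfl fun x _ => by ring
      have e2 : ∑ x ∈ Bm, a x * (Ex x - Gx x)
          = ∑ x ∈ Bm, a x * Ex x - ∑ x ∈ Bm, a x * Gx x := by
        rw [← Finset.sum_sub_distrib]
        exact Finset.sum_congr rfl fun x _ => by ring
      rw [e1, e2]
      ring
    rw [hfin1, hfin2, hkeyS]
    -- final triangle inequality
    have habs_bnd : ∀ S : Finset ℝ, S ⊆ B →
        |∑ x ∈ S, a x * (Ex x - Gx x)| ≤ (∑ x ∈ S, a x) * ε := by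
      intro S hS
      calc |∑ x ∈ S, a x * (Ex x - Gx x)| ≤ ∑ x ∈ S, |a x * (Ex x - Gx x)| :=
            Finset.abs_sum_le_sum_abs _ _
        _ ≤ ∑ x ∈ S, a x * ε := by
            refine Finset.sum_le_sum fun x hx => ?_
            rw [abs_mul, abs_of_pos (hBa x (hS hx))]
            exact mul_le_mul_of_nonneg_left (hperx x (hS hx)) (le_of_lt (hBa x (hS hx)))
        _ = (∑ x ∈ S, a x) * ε := by rw [← Finset.sum_mul]
    calc |(∑ x ∈ Bp, a x * (Ex x - Gx x)) + (-1:ℝ)^t * (∑ x ∈ Bm, a x * (Ex x - Gx x))|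
        ≤ |∑ x ∈ Bp, a x * (Ex x - Gx x)| + |(-1:ℝ)^t * (∑ x ∈ Bm, a x * (Ex x - Gx x))| :=
          abs_add_le _ _
      _ = |∑ x ∈ Bp, a x * (Ex x - Gx x)| + |∑ x ∈ Bm, a x * (Ex x - Gx x)| := by
          rw [abs_mul, abs_pow, abs_neg, abs_one, one_pow, one_mul]
      _ ≤ (∑ x ∈ Bp, a x) * ε + (∑ x ∈ Bm, a x) * ε :=
          add_le_add (habs_bnd Bp hBpB) (habs_bnd Bm hBmB)
      _ = ε * w := by rw [← add_mul, hsum_split]; ring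
end

section
/- Let n ≥ 2 and R ≥ 0 be integers with 2^R ≤ n. For each r ∈ {0,…,R}, let w_r ≥ 0 and let E_r ∈ ℝ^{n×n} be a matrix satisfying |(E_r)_{i,j}| ≤ w_r whenever both i < n/2^r and j < n/2^r, and (E_r)_{i,j} = 0 otherwise. Then ‖Σ_{r=0}^{R} E_r‖₂ ≤ 10 · max_{0≤r≤R} w_r · (n/2^r), and ‖Σ_{r=0}^{R} E_r‖_F ≤ 10 · √( Σ_{r₁=0}^{R} Σ_{r₂=0}^{R} w_{r₁} w_{r₂} · (n/2^{max(r₁,r₂)})² ). -/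
open scoped BigOperators

lemma sum_inv_sqrt_le : ∀ m : ℕ, 1 ≤ m →
    ∑ j ∈ Finset.range m, 1 / Real.sqrt (j + 1) ≤ 2 * Real.sqrt m - 1 := by
  intro m hm
  induction m with
  | zero => omega
  | succ k ih =>
    rcases Nat.eq_or_lt_of_le hm with h | h
    · simp [← h]
      norm_num [Real.sqrt_one]
    · have hk : 1 ≤ k := by omega
      have := ih hk
      rw [Finset.sum_range_succ]
      have hb0 : Real.sqrt ((k:ℝ) + 1) ≥ 0 := Real.sqrt_nonneg _
      have ha : Real.sqrt (k:ℝ) ≥ 0 := Real.sqrt_nonneg _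
      have hb2 : (Real.sqrt ((k:ℝ)+1))^2 = (k:ℝ)+1 := Real.sq_sqrt (by positivity)
      have ha2 : (Real.sqrt (k:ℝ))^2 = (k:ℝ) := Real.sq_sqrt (by positivity)
      have hb : Real.sqrt ((k:ℝ) + 1) ≥ 1 := by nlinarith
      have hstep : 1 / Real.sqrt ((k:ℝ) + 1) ≤ 2 * Real.sqrt ((k:ℝ) + 1) - 2 * Real.sqrt (k:ℝ) := by
        rw [div_le_iff₀ (by linarith)]
        nlinarith [sq_nonneg (Real.sqrt ((k:ℝ)+1) - Real.sqrt (k:ℝ))]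
      push_cast
      push_cast at this
      linarith

lemma tail_pt (x : ℝ) (hx : 1 ≤ x) :
    1 / (x * Real.sqrt (x + 1)) ≤ 2 / Real.sqrt (x - 1/2) - 2 / Real.sqrt (x + 1/2) := by
  set a := Real.sqrt (x + 1) with ha
  set b := Real.sqrt (x - 1/2) with hb
  set c := Real.sqrt (x + 1/2) with hc
  set d := Real.sqrt x with hd
  have ha2 : a^2 = x + 1 := Real.sq_sqrt (by linarith)
  have hb2 : b^2 = x - 1/2 := Real.sq_sqrt (by linarith)
  have hc2 : c^2 = x + 1/2 := Real.sq_sqrt (by linarith)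
  have hd2 : d^2 = x := Real.sq_sqrt (by linarith)
  have ha0 : 0 ≤ a := Real.sqrt_nonneg _
  have hb0 : 0 < b := Real.sqrt_pos.mpr (by linarith)
  have hc0 : 0 < c := Real.sqrt_pos.mpr (by linarith)
  have hd0 : 0 ≤ d := Real.sqrt_nonneg _
  have ha1 : 1 ≤ a := by nlinarith
  have hcb : b ≤ c := by nlinarith
  -- b*c ≤ x
  have hbc : b * c ≤ x := by nlinarith [mul_nonneg hb0.le hc0.le, sq_nonneg (b*c)]
  -- b + c ≤ 2d
  have hbpc : b + c ≤ 2 * d := by nlinarith [sq_nonneg (b - c), sq_nonneg (b + c - 2*d)]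
  have hda : d ≤ a := by nlinarith
  -- key: b*c*(b+c) ≤ 2*x*a
  have hkey : b * c * (b + c) ≤ 2 * x * a := by
    calc b * c * (b + c) ≤ x * (2 * d) := by
          apply mul_le_mul hbc hbpc (by positivity) (by linarith)
      _ ≤ 2 * x * a := by nlinarith
  -- RHS = 2/(b*c*(b+c))
  have hrhs : 2 / b - 2 / c = 2 / (b * c * (b + c)) := by
    have h1 : c - b = 1 / (b + c) := by
      rw [eq_div_iff (by positivity)]
      nlinarith
    have h2 : (c - b) * (b + c) = 1 := by
      rw [h1]; field_simp
    field_simp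
    linear_combination h2
  rw [hrhs]
  have hxa : 0 < x * a := by nlinarith
  rw [div_le_div_iff₀ (by positivity) (by positivity)]
  linarith

lemma tail_sum (m : ℕ) (hm : 1 ≤ m) (N : ℕ) :
    ∑ j ∈ Finset.Ico m N, 1 / ((j:ℝ) * Real.sqrt ((j:ℝ) + 1)) ≤ 2 / Real.sqrt ((m:ℝ) - 1/2) := by
  rcases le_or_gt N m with h | h
  · rw [Finset.Ico_eq_empty (by omega)]
    simp
    positivity
  · have key : ∀ N', m ≤ N' → ∑ j ∈ Finset.Ico m N', 1 / ((j:ℝ) * Real.sqrt ((j:ℝ) + 1)) ≤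
        2 / Real.sqrt ((m:ℝ) - 1/2) - 2 / Real.sqrt ((N':ℝ) - 1/2) := by
      intro N' hN'
      induction N' , hN' using Nat.le_induction with
      | base => simp
      | succ k hk ihk =>
        rw [Finset.sum_Ico_succ_top hk]
        have hpt := tail_pt (k:ℝ) (by exact_mod_cast hm.trans hk)
        have : ((k:ℝ) + 1) - 1/2 = (k:ℝ) + 1/2 := by ring
        push_cast
        rw [this]
        push_cast at ihk
        linarith
    have := key N h.le
    have h2 : 0 ≤ 2 / Real.sqrt ((N:ℝ) - 1/2) := by positivity
    linarith

lemma red_aux (c s t : ℝ) (hc : 0 < c) (hs0 : 0 < s) (ht0 : 0 < t)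
    (h : (2*s - 1)*t*s + 2*c*s ≤ 5*c*t) :
    (2*s - 1)/c + 2/t ≤ 5/s := by
  rw [div_add_div _ _ hc.ne' ht0.ne', div_le_div_iff₀ (by positivity) hs0]
  nlinarith [h]

set_option maxHeartbeats 1000000 in
lemma final_numeric (i : ℕ) :
    (2 * Real.sqrt ((i:ℝ) + 1) - 1) / ((max i 1 : ℕ) : ℝ) + 2 / Real.sqrt ((i:ℝ) + 1/2)
      ≤ 5 / Real.sqrt ((i:ℝ) + 1) := by
  have hs2 : (Real.sqrt ((i:ℝ) + 1))^2 = (i:ℝ) + 1 := Real.sq_sqrt (by positivity)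
  have ht2 : (Real.sqrt ((i:ℝ) + 1/2))^2 = (i:ℝ) + 1/2 := Real.sq_sqrt (by positivity)
  have hs0 : 0 < Real.sqrt ((i:ℝ) + 1) := Real.sqrt_pos.mpr (by positivity)
  have ht0 : 0 < Real.sqrt ((i:ℝ) + 1/2) := Real.sqrt_pos.mpr (by positivity)
  set s := Real.sqrt ((i:ℝ) + 1) with hsdef
  set t := Real.sqrt ((i:ℝ) + 1/2) with htdef
  clear_value s t
  have hc0 : (0:ℝ) < ((max i 1 : ℕ) : ℝ) := by
    have : 1 ≤ max i 1 := le_max_right _ _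
    exact_mod_cast Nat.lt_of_lt_of_le Nat.zero_lt_one this
  apply red_aux _ _ _ hc0 hs0 ht0
  rcases Nat.lt_or_ge i 3 with h3 | h3
  · interval_cases i
    · -- i = 0 : c = 1, s² = 1, t² = 1/2
      have hc : ((max 0 1 : ℕ) : ℝ) = 1 := by norm_num
      rw [hc]
      norm_num at hs2 ht2
      have hs1 : s = 1 := by
        rcases hs2 with h | h
        · exact h
        · linarith
      rw [hs1]
      nlinarith
    · have hc : ((max 1 1 : ℕ) : ℝ) = 1 := by norm_num
      rw [hc]
      norm_num at hs2 ht2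
      have hsl : (1.4142:ℝ) ≤ s := by nlinarith
      have hsu : s ≤ 1.4143 := by nlinarith
      have htl : (1.2247:ℝ) ≤ t := by nlinarith
      have htu : t ≤ 1.2248 := by nlinarith
      nlinarith [mul_le_mul hsu htu (by linarith) (by linarith)]
    · have hc : ((max 2 1 : ℕ) : ℝ) = 2 := by norm_num
      rw [hc]
      norm_num at hs2 ht2
      have hsl : (1.7320:ℝ) ≤ s := by nlinarith
      have hsu : s ≤ 1.7321 := by nlinarith
      have htl : (1.5811:ℝ) ≤ t := by nlinarith
      have htu : t ≤ 1.5812 := by nlinarith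
      nlinarith [mul_le_mul hsu htu (by linarith) (by linarith)]
  · -- i ≥ 3
    have hc : ((max i 1 : ℕ) : ℝ) = (i:ℝ) := by
      have : max i 1 = i := max_eq_left (by omega)
      rw [this]
    rw [hc]
    have hi : (3:ℝ) ≤ (i:ℝ) := by exact_mod_cast h3
    have hieq : (i:ℝ) = s^2 - 1 := by linarith
    have hsge : 2 ≤ s := by nlinarith
    have hst : 2*s^2 - 1 ≤ 2*s*t := by
      nlinarith [sq_nonneg (2*s*t - (2*s^2 - 1)), mul_pos hs0 ht0]
    have hts : t ≤ s := by nlinarith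
    rw [hieq]
    -- goal: (2s-1)ts + 2(s²-1)s ≤ 5(s²-1)t
    have hcoef : (0:ℝ) ≤ 3*s^2 + s - 5 := by nlinarith
    have hprod : (0:ℝ) ≤ (3*s^2 + s - 5) * (2*s*t - (2*s^2 - 1)) :=
      mul_nonneg hcoef (by linarith)
    have h2u : (0:ℝ) ≤ s - 2 := by linarith
    have hpoly : (0:ℝ) ≤ 2*s^4 + 2*s^3 - 9*s^2 - s + 5 := by
      nlinarith [mul_nonneg h2u h2u, mul_nonneg (mul_nonneg h2u h2u) h2u,
        mul_nonneg (mul_nonneg (mul_nonneg h2u h2u) h2u) h2u]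
    nlinarith [hprod, hpoly, hs0, mul_pos hs0 hs0]

lemma indicator_count (n : ℕ) (q : ℝ) (hq : 1 ≤ q) :
    ∑ i : Fin n, (if ((i:ℕ):ℝ) < q then (1:ℝ) else 0) ≤ 2 * q := by
  set m₀ := Nat.ceil q with hm₀
  have key : ∑ i : Fin n, (if ((i:ℕ):ℝ) < q then (1:ℝ) else 0)
      = ∑ k ∈ Finset.range n, (if (k < m₀) then (1:ℝ) else 0) := by
    rw [Fin.sum_univ_eq_sum_range (fun k => if ((k:ℝ)) < q then (1:ℝ) else 0) n]
    apply Finset.sum_congr rfl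
    intro k _
    by_cases h : (k:ℝ) < q
    · rw [if_pos h, if_pos (Nat.lt_ceil.mpr h)]
    · rw [if_neg h, if_neg (fun hc => h (Nat.lt_ceil.mp hc))]
  rw [key]
  have h1 : ∑ k ∈ Finset.range n, (if (k < m₀) then (1:ℝ) else 0)
      ≤ ∑ k ∈ Finset.range m₀, (1:ℝ) := by
    rcases le_or_gt n m₀ with h | h
    · calc ∑ k ∈ Finset.range n, (if (k < m₀) then (1:ℝ) else 0)
          ≤ ∑ k ∈ Finset.range n, (1:ℝ) := by
            apply Finset.sum_le_sum; intro k _; split <;> norm_num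
        _ ≤ ∑ k ∈ Finset.range m₀, (1:ℝ) := by
            apply Finset.sum_le_sum_of_subset_of_nonneg (Finset.range_subset_range.mpr h)
            intro k _ _; norm_num
    · calc ∑ k ∈ Finset.range n, (if (k < m₀) then (1:ℝ) else 0)
          = ∑ k ∈ Finset.range m₀, (if (k < m₀) then (1:ℝ) else 0)
            + ∑ k ∈ Finset.Ico m₀ n, (if (k < m₀) then (1:ℝ) else 0) :=
            (Finset.sum_range_add_sum_Ico _ h.le).symm
        _ = ∑ k ∈ Finset.range m₀, (if (k < m₀) then (1:ℝ) else 0) + 0 := by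
            congr 1
            apply Finset.sum_eq_zero
            intro k hk
            rw [if_neg]
            have := (Finset.mem_Ico.mp hk).1
            omega
        _ ≤ ∑ k ∈ Finset.range m₀, (1:ℝ) := by
            rw [add_zero]
            apply Finset.sum_le_sum; intro k _; split <;> norm_num
  have h2 : ∑ k ∈ Finset.range m₀, (1:ℝ) = (m₀:ℝ) := by simp
  have h3 : (m₀:ℝ) < q + 1 := Nat.ceil_lt_add_one (by linarith)
  linarith

lemma keyA (n i : ℕ) :
    ∑ j ∈ Finset.range n, 1 / (((max (max i j) 1 : ℕ) : ℝ) * Real.sqrt ((j:ℝ) + 1))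
      ≤ 5 / Real.sqrt ((i:ℝ) + 1) := by
  set f : ℕ → ℝ := fun j => 1 / (((max (max i j) 1 : ℕ) : ℝ) * Real.sqrt ((j:ℝ) + 1)) with hf
  have hfnn : ∀ j, 0 ≤ f j := by intro j; positivity
  set N := max n (i+1) with hN
  have h1 : ∑ j ∈ Finset.range n, f j ≤ ∑ j ∈ Finset.range N, f j :=
    Finset.sum_le_sum_of_subset_of_nonneg
      (Finset.range_subset_range.mpr (le_max_left _ _)) (fun j _ _ => hfnn j)
  have hsplit : ∑ j ∈ Finset.range (i+1), f j + ∑ j ∈ Finset.Ico (i+1) N, f j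
      = ∑ j ∈ Finset.range N, f j :=
    Finset.sum_range_add_sum_Ico f (le_max_right _ _)
  -- part 1
  have hpart1 : ∑ j ∈ Finset.range (i+1), f j
      ≤ (2 * Real.sqrt ((i:ℝ) + 1) - 1) / ((max i 1 : ℕ) : ℝ) := by
    have heq : ∀ j ∈ Finset.range (i+1), f j = (((max i 1:ℕ):ℝ))⁻¹ * (1 / Real.sqrt ((j:ℝ)+1)) := by
      intro j hj
      have hj' : j ≤ i := by
        have := Finset.mem_range.mp hj; omega
      have : max (max i j) 1 = max i 1 := by
        rw [max_eq_left hj']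
      rw [hf]
      simp only [this]
      rw [one_div, mul_inv, one_div]
    rw [Finset.sum_congr rfl heq, ← Finset.mul_sum]
    have hc0 : (0:ℝ) < ((max i 1 : ℕ) : ℝ) := by
      have : (1:ℕ) ≤ max i 1 := le_max_right _ _
      exact_mod_cast Nat.lt_of_lt_of_le Nat.zero_lt_one this
    have hsum := sum_inv_sqrt_le (i+1) (by omega)
    push_cast at hsum
    rw [div_eq_inv_mul]
    apply mul_le_mul_of_nonneg_left _ (by positivity)
    exact hsum
  -- part 2
  have hpart2 : ∑ j ∈ Finset.Ico (i+1) N, f j ≤ 2 / Real.sqrt ((i:ℝ) + 1/2) := by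
    have heq : ∀ j ∈ Finset.Ico (i+1) N, f j = 1 / ((j:ℝ) * Real.sqrt ((j:ℝ)+1)) := by
      intro j hj
      have hj' : i + 1 ≤ j := (Finset.mem_Ico.mp hj).1
      have h1 : max (max i j) 1 = j := by
        rw [max_eq_right (by omega : i ≤ j)]
        exact max_eq_left (by omega)
      rw [hf]
      simp only [h1]
    rw [Finset.sum_congr rfl heq]
    have := tail_sum (i+1) (by omega) N
    have hcast : ((i+1:ℕ):ℝ) - 1/2 = (i:ℝ) + 1/2 := by push_cast; ring
    rwa [hcast] at this
  calc ∑ j ∈ Finset.range n, f j ≤ ∑ j ∈ Finset.range N, f j := h1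
    _ = ∑ j ∈ Finset.range (i+1), f j + ∑ j ∈ Finset.Ico (i+1) N, f j := hsplit.symm
    _ ≤ (2 * Real.sqrt ((i:ℝ) + 1) - 1) / ((max i 1 : ℕ) : ℝ) + 2 / Real.sqrt ((i:ℝ) + 1/2) := by
        exact add_le_add hpart1 hpart2
    _ ≤ 5 / Real.sqrt ((i:ℝ) + 1) := final_numeric i

/-- Correlation decay across nested blocks: if each `E_r` is supported on the
top-left `(n/2^r) × (n/2^r)` block with entries bounded by `w_r`, then the norms of
`Σ_r E_r` are bounded as if the terms were essentially orthogonal. -/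
theorem block_error_correlation (n R : ℕ) (hn : 2 ≤ n) (hR : 2 ^ R ≤ n)
    (w : ℕ → ℝ) (hw : ∀ r, r ≤ R → 0 ≤ w r)
    (E : ℕ → Matrix (Fin n) (Fin n) ℝ)
    (hE₁ : ∀ r, r ≤ R → ∀ i j : Fin n,
      ((i : ℝ) < (n : ℝ) / 2 ^ r ∧ (j : ℝ) < (n : ℝ) / 2 ^ r) → |E r i j| ≤ w r)
    (hE₂ : ∀ r, r ≤ R → ∀ i j : Fin n,
      ¬((i : ℝ) < (n : ℝ) / 2 ^ r ∧ (j : ℝ) < (n : ℝ) / 2 ^ r) → E r i j = 0) :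
    specNorm (∑ r ∈ Finset.range (R + 1), E r) ≤
      10 * ((Finset.range (R + 1)).sup' (Finset.nonempty_range_iff.mpr (by omega))
        (fun r => w r * ((n : ℝ) / 2 ^ r))) ∧
    froNorm (∑ r ∈ Finset.range (R + 1), E r) ≤
      10 * Real.sqrt (∑ r₁ ∈ Finset.range (R + 1), ∑ r₂ ∈ Finset.range (R + 1),
        w r₁ * w r₂ * ((n : ℝ) / 2 ^ (max r₁ r₂)) ^ 2) := by
  have hn0 : (0:ℝ) < (n:ℝ) := by exact_mod_cast (show 0 < n by omega)

  have hne : (Finset.range (R + 1)).Nonempty := Finset.nonempty_range_add_one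
  set M := (Finset.range (R + 1)).sup' hne (fun r => w r * ((n : ℝ) / 2 ^ r)) with hMdef
  have hM : ∀ r, r ≤ R → w r * ((n : ℝ) / 2 ^ r) ≤ M := by
    intro r hr
    exact Finset.le_sup' (fun r => w r * ((n:ℝ) / 2 ^ r)) (Finset.mem_range.mpr (Nat.lt_succ_of_le hr))
  have hM0 : 0 ≤ M := by
    have h0 := hM 0 (by omega)
    have : 0 ≤ w 0 * ((n:ℝ) / 2 ^ 0) := by
      apply mul_nonneg (hw 0 (by omega)); positivity
    linarith
  set S := ∑ r ∈ Finset.range (R + 1), E r with hS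
  have hSapp : ∀ i j : Fin n, S i j = ∑ r ∈ Finset.range (R + 1), E r i j := by
    intro i j
    rw [hS]
    simp [Matrix.sum_apply]
  -- entry bound
  have hSentry : ∀ i j : Fin n,
      |S i j| ≤ 2 * M / ((max (max (i:ℕ) (j:ℕ)) 1 : ℕ) : ℝ) := by
    intro i j
    set K : ℕ := max (max (i:ℕ) (j:ℕ)) 1 with hK
    have hK1 : (1:ℝ) ≤ (K:ℝ) := by
      have : 1 ≤ K := le_max_right _ _
      exact_mod_cast this
    have hK0 : (0:ℝ) < (K:ℝ) := by linarith
    set s := (Finset.range (R+1)).filter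
      (fun r => ((i:ℕ):ℝ) < (n:ℝ) / 2 ^ r ∧ ((j:ℕ):ℝ) < (n:ℝ) / 2 ^ r) with hs
    have h1 : |S i j| ≤ ∑ r ∈ s, w r := by
      rw [hSapp i j]
      calc |∑ r ∈ Finset.range (R+1), E r i j| ≤ ∑ r ∈ Finset.range (R+1), |E r i j| :=
            Finset.abs_sum_le_sum_abs _ _
        _ ≤ ∑ r ∈ Finset.range (R+1),
              (if ((i:ℕ):ℝ) < (n:ℝ) / 2 ^ r ∧ ((j:ℕ):ℝ) < (n:ℝ) / 2 ^ r then w r else 0) := by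
            apply Finset.sum_le_sum
            intro r hr
            have hrR : r ≤ R := by have := Finset.mem_range.mp hr; omega
            by_cases hc : ((i:ℕ):ℝ) < (n:ℝ) / 2 ^ r ∧ ((j:ℕ):ℝ) < (n:ℝ) / 2 ^ r
            · rw [if_pos hc]; exact hE₁ r hrR i j hc
            · rw [if_neg hc, hE₂ r hrR i j hc]; simp
        _ = ∑ r ∈ s, w r := (Finset.sum_filter _ _).symm
    have hgeo : (∑ r ∈ s, (2:ℝ) ^ r) ≤ 2 * (n:ℝ) / (K:ℝ) := by
      rcases Finset.eq_empty_or_nonempty s with hse | hsne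
      · rw [hse]; simp; positivity
      · set m := s.max' hsne with hm
        have hms : m ∈ s := s.max'_mem hsne
        have hmcond := (Finset.mem_filter.mp hms).2
        have hmR : m ≤ R := by
          have := Finset.mem_range.mp (Finset.mem_filter.mp hms).1; omega
        have hsub : s ⊆ Finset.range (m+1) := by
          intro r hr
          exact Finset.mem_range.mpr (by
            have := Finset.le_max' s r hr; omega)
        have hsum1 : (∑ r ∈ s, (2:ℝ) ^ r) ≤ ∑ r ∈ Finset.range (m+1), (2:ℝ) ^ r :=
          Finset.sum_le_sum_of_subset_of_nonneg hsub (fun r _ _ => by positivity)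
        have hsum2 : ∑ r ∈ Finset.range (m+1), (2:ℝ) ^ r = 2 ^ (m+1) - 1 := by
          have := geom_sum_eq (show (2:ℝ) ≠ 1 by norm_num) (m+1)
          rw [this]; norm_num
        have h2mK : (2:ℝ) ^ m * (K:ℝ) ≤ (n:ℝ) := by
          by_cases hij : max (i:ℕ) (j:ℕ) = 0
          · have hKone : K = 1 := by rw [hK, hij]; omega
            have hKcast : ((K:ℕ):ℝ) = 1 := by rw [hKone]; norm_num
            rw [hKcast, mul_one]
            have : (2:ℕ) ^ m ≤ n := le_trans (Nat.pow_le_pow_right (by omega) hmR) hR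
            exact_mod_cast this
          · have hKij : K = max (i:ℕ) (j:ℕ) := by
              rw [hK]; exact max_eq_left (by omega)
            have hmax : ((max (i:ℕ) (j:ℕ) : ℕ) : ℝ) < (n:ℝ) / 2 ^ m := by
              rw [Nat.cast_max]
              exact max_lt hmcond.1 hmcond.2
            rw [hKij]
            have h2m : (0:ℝ) < 2 ^ m := by positivity
            rw [lt_div_iff₀ h2m] at hmax
            nlinarith [hmax]
        rw [le_div_iff₀ hK0]
        calc (∑ r ∈ s, (2:ℝ) ^ r) * (K:ℝ) ≤ (2 ^ (m+1) - 1) * (K:ℝ) := by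
              apply mul_le_mul_of_nonneg_right _ hK0.le
              rw [← hsum2]; exact hsum1
          _ ≤ 2 * (n:ℝ) := by
              have : (2:ℝ) ^ (m+1) = 2 * 2 ^ m := by ring
              nlinarith [h2mK, hK1]
    have h2 : ∑ r ∈ s, w r ≤ ∑ r ∈ s, M * 2 ^ r / (n:ℝ) := by
      apply Finset.sum_le_sum
      intro r hr
      have hrR : r ≤ R := by
        have := Finset.mem_range.mp (Finset.mem_filter.mp hr).1; omega
      have hMr := hM r hrR
      have h2r : (0:ℝ) < 2 ^ r := by positivity
      have e : w r * (n:ℝ) = (w r * ((n:ℝ) / 2 ^ r)) * 2 ^ r := by field_simp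
      rw [le_div_iff₀ hn0, e]
      exact mul_le_mul_of_nonneg_right hMr h2r.le
    have h3 : ∑ r ∈ s, M * 2 ^ r / (n:ℝ) = (M / (n:ℝ)) * ∑ r ∈ s, (2:ℝ) ^ r := by
      rw [Finset.mul_sum]
      apply Finset.sum_congr rfl
      intro r _; ring
    have h4 : (M / (n:ℝ)) * (∑ r ∈ s, (2:ℝ) ^ r) ≤ (M / (n:ℝ)) * (2 * (n:ℝ) / (K:ℝ)) :=
      mul_le_mul_of_nonneg_left hgeo (by positivity)
    have h5 : (M / (n:ℝ)) * (2 * (n:ℝ) / (K:ℝ)) = 2 * M / (K:ℝ) := by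
      field_simp
    calc |S i j| ≤ ∑ r ∈ s, w r := h1
      _ ≤ ∑ r ∈ s, M * 2 ^ r / (n:ℝ) := h2
      _ = (M / (n:ℝ)) * ∑ r ∈ s, (2:ℝ) ^ r := h3
      _ ≤ (M / (n:ℝ)) * (2 * (n:ℝ) / (K:ℝ)) := h4
      _ = 2 * M / (K:ℝ) := h5

  -- weights and Schur bound
  set p : ℕ → ℝ := fun k => 1 / Real.sqrt ((k:ℝ) + 1) with hp
  have hp0 : ∀ k : ℕ, 0 < p k := by
    intro k; rw [hp]
    have : 0 < Real.sqrt ((k:ℝ) + 1) := Real.sqrt_pos.mpr (by positivity)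
    positivity
  set B : Fin n → Fin n → ℝ :=
    fun i j => 2 * M / ((max (max (i:ℕ) (j:ℕ)) 1 : ℕ) : ℝ) with hB
  have hKpos : ∀ i j : Fin n, (0:ℝ) < ((max (max (i:ℕ) (j:ℕ)) 1 : ℕ) : ℝ) := by
    intro i j
    have : 1 ≤ max (max (i:ℕ) (j:ℕ)) 1 := le_max_right _ _
    have : (1:ℝ) ≤ ((max (max (i:ℕ) (j:ℕ)) 1 : ℕ) : ℝ) := by exact_mod_cast this
    linarith
  have hB0 : ∀ i j : Fin n, 0 ≤ B i j := by
    intro i j; rw [hB]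
    exact div_nonneg (by linarith) (hKpos i j).le
  have hBsym : ∀ i j : Fin n, B i j = B j i := by
    intro i j; rw [hB]
    simp only [max_comm (i:ℕ) (j:ℕ)]
  have hrow : ∀ i : Fin n, ∑ j, B i j * p j.1 ≤ 10 * M * p i.1 := by
    intro i
    have hterm : ∀ j : Fin n, B i j * p j.1
        = 2 * M * (1 / (((max (max (i:ℕ) (j:ℕ)) 1 : ℕ) : ℝ) * Real.sqrt (((j:ℕ):ℝ) + 1))) := by
      intro j
      rw [hB, hp]
      rw [div_mul_div_comm, mul_one, mul_one_div]
    calc ∑ j, B i j * p j.1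
        = 2 * M * ∑ j : Fin n,
            (1 / (((max (max (i:ℕ) (j:ℕ)) 1 : ℕ) : ℝ) * Real.sqrt (((j:ℕ):ℝ) + 1))) := by
          rw [Finset.mul_sum]
          exact Finset.sum_congr rfl (fun j _ => hterm j)
      _ ≤ 2 * M * (5 / Real.sqrt (((i:ℕ):ℝ) + 1)) := by
          apply mul_le_mul_of_nonneg_left _ (by linarith)
          rw [Fin.sum_univ_eq_sum_range
            (fun k => 1 / (((max (max (i:ℕ) k) 1 : ℕ) : ℝ) * Real.sqrt ((k:ℝ) + 1))) n]
          exact keyA n (i:ℕ)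
      _ = 10 * M * p i.1 := by rw [hp]; ring
  have hspec : specNorm S ≤ 10 * M := by
    haveI : Nonempty {x : Fin n → ℝ // euclNorm x ≤ 1} := ⟨⟨0, by
      simp [euclNorm]⟩⟩
    apply ciSup_le
    rintro ⟨x, hx⟩
    show euclNorm (S.mulVec x) ≤ 10 * M
    have hx2 : ∑ j, x j ^ 2 ≤ 1 := by
      have h2 : (∑ j, x j ^ 2) = (Real.sqrt (∑ j, x j ^ 2)) ^ 2 :=
        (Real.sq_sqrt (by positivity)).symm
      rw [h2]
      calc (Real.sqrt (∑ j, x j ^ 2)) ^ 2 ≤ (1:ℝ)^2 :=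
            pow_le_pow_left₀ (Real.sqrt_nonneg _) hx 2
        _ = 1 := one_pow 2
    have hinnernn : ∀ i : Fin n, 0 ≤ ∑ j, (B i j / p j.1) * x j ^ 2 := by
      intro i
      apply Finset.sum_nonneg
      intro j _
      exact mul_nonneg (div_nonneg (hB0 i j) (hp0 j).le) (sq_nonneg _)
    have hmv : ∀ i : Fin n, (S.mulVec x i) ^ 2
        ≤ (10 * M * p i.1) * (∑ j, (B i j / p j.1) * x j ^ 2) := by
      intro i
      have habs : |S.mulVec x i| ≤ ∑ j, B i j * |x j| := by
        show |∑ j, S i j * x j| ≤ _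
        calc |∑ j, S i j * x j| ≤ ∑ j, |S i j * x j| := Finset.abs_sum_le_sum_abs _ _
          _ = ∑ j, |S i j| * |x j| := by
              exact Finset.sum_congr rfl (fun j _ => abs_mul _ _)
          _ ≤ ∑ j, B i j * |x j| := by
              apply Finset.sum_le_sum
              intro j _
              have := hSentry i j
              exact mul_le_mul_of_nonneg_right (by rw [hB]; exact this) (abs_nonneg _)
      have hCS : (∑ j, B i j * |x j|) ^ 2
          ≤ (∑ j, B i j * p j.1) * (∑ j, (B i j / p j.1) * x j ^ 2) := by
        have key := Finset.sum_mul_sq_le_sq_mul_sq Finset.univ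
          (fun j => Real.sqrt (B i j * p j.1))
          (fun j => Real.sqrt (B i j / p j.1) * |x j|)
        have e1 : ∀ j : Fin n, Real.sqrt (B i j * p j.1)
            * (Real.sqrt (B i j / p j.1) * |x j|) = B i j * |x j| := by
          intro j
          rw [← mul_assoc, ← Real.sqrt_mul (mul_nonneg (hB0 i j) (hp0 j).le)]
          have : B i j * p j.1 * (B i j / p j.1) = (B i j) ^ 2 := by
            rw [mul_div_assoc', div_eq_iff (hp0 j).ne']
            ring
          rw [this, Real.sqrt_sq (hB0 i j)]
        have e2 : ∀ j : Fin n, (Real.sqrt (B i j * p j.1)) ^ 2 = B i j * p j.1 := by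
          intro j
          exact Real.sq_sqrt (mul_nonneg (hB0 i j) (hp0 j).le)
        have e3 : ∀ j : Fin n, (Real.sqrt (B i j / p j.1) * |x j|) ^ 2
            = (B i j / p j.1) * x j ^ 2 := by
          intro j
          rw [mul_pow, Real.sq_sqrt (div_nonneg (hB0 i j) (hp0 j).le), sq_abs]
        calc (∑ j, B i j * |x j|) ^ 2
            = (∑ j, Real.sqrt (B i j * p j.1)
                * (Real.sqrt (B i j / p j.1) * |x j|)) ^ 2 := by
              rw [Finset.sum_congr rfl (fun j _ => (e1 j).symm)]
          _ ≤ (∑ j, (Real.sqrt (B i j * p j.1)) ^ 2)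
              * (∑ j, (Real.sqrt (B i j / p j.1) * |x j|) ^ 2) := key
          _ = (∑ j, B i j * p j.1) * (∑ j, (B i j / p j.1) * x j ^ 2) := by
              rw [Finset.sum_congr rfl (fun j _ => e2 j),
                Finset.sum_congr rfl (fun j _ => e3 j)]
      calc (S.mulVec x i) ^ 2 = |S.mulVec x i| ^ 2 := (sq_abs _).symm
        _ ≤ (∑ j, B i j * |x j|) ^ 2 := by
            apply pow_le_pow_left₀ (abs_nonneg _) habs 2
        _ ≤ (∑ j, B i j * p j.1) * (∑ j, (B i j / p j.1) * x j ^ 2) := hCS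
        _ ≤ (10 * M * p i.1) * (∑ j, (B i j / p j.1) * x j ^ 2) :=
            mul_le_mul_of_nonneg_right (hrow i) (hinnernn i)
    have hcol : ∀ j : Fin n, ∑ i, B i j * p i.1 ≤ 10 * M * p j.1 := by
      intro j
      calc ∑ i, B i j * p i.1 = ∑ i, B j i * p i.1 :=
            Finset.sum_congr rfl (fun i _ => by rw [hBsym i j])
        _ ≤ 10 * M * p j.1 := hrow j
    have hsum : ∑ i, (S.mulVec x i) ^ 2 ≤ 100 * M ^ 2 := by
      calc ∑ i, (S.mulVec x i) ^ 2
          ≤ ∑ i, (10 * M * p i.1) * (∑ j, (B i j / p j.1) * x j ^ 2) :=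
            Finset.sum_le_sum (fun i _ => hmv i)
        _ = ∑ i : Fin n, ∑ j : Fin n, 10 * M * ((x j ^ 2 / p j.1) * (B i j * p i.1)) := by
            apply Finset.sum_congr rfl
            intro i _
            rw [Finset.mul_sum]
            apply Finset.sum_congr rfl
            intro j _
            field_simp
            try ring
        _ = ∑ j : Fin n, ∑ i : Fin n, 10 * M * ((x j ^ 2 / p j.1) * (B i j * p i.1)) :=
            Finset.sum_comm
        _ = ∑ j : Fin n, 10 * M * ((x j ^ 2 / p j.1) * (∑ i : Fin n, B i j * p i.1)) := by
            apply Finset.sum_congr rfl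
            intro j _
            rw [Finset.mul_sum, Finset.mul_sum]
            try (apply Finset.sum_congr rfl; intro i _; ring)
        _ ≤ ∑ j : Fin n, 10 * M * ((x j ^ 2 / p j.1) * (10 * M * p j.1)) := by
            apply Finset.sum_le_sum
            intro j _
            apply mul_le_mul_of_nonneg_left _ (by linarith)
            apply mul_le_mul_of_nonneg_left (hcol j)
            exact div_nonneg (sq_nonneg _) (hp0 (j:ℕ)).le
        _ = 100 * M ^ 2 * ∑ j, x j ^ 2 := by
            rw [Finset.mul_sum]
            apply Finset.sum_congr rfl
            intro j _
            have hpj := (hp0 (j:ℕ)).ne'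
            field_simp
            ring
        _ ≤ 100 * M ^ 2 := by nlinarith [hx2, sq_nonneg M]
    show Real.sqrt (∑ i, (S.mulVec x) i ^ 2) ≤ 10 * M
    calc Real.sqrt (∑ i, (S.mulVec x) i ^ 2) ≤ Real.sqrt (100 * M ^ 2) :=
          Real.sqrt_le_sqrt hsum
      _ = 10 * M := by
          rw [show (100 : ℝ) * M ^ 2 = (10 * M) ^ 2 by ring, Real.sqrt_sq (by linarith)]

  -- Frobenius part
  have hX0 : 0 ≤ ∑ r₁ ∈ Finset.range (R + 1), ∑ r₂ ∈ Finset.range (R + 1),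
      w r₁ * w r₂ * ((n : ℝ) / 2 ^ (max r₁ r₂)) ^ 2 := by
    apply Finset.sum_nonneg; intro r1 hr1
    apply Finset.sum_nonneg; intro r2 hr2
    have h1 := hw r1 (by have := Finset.mem_range.mp hr1; omega)
    have h2 := hw r2 (by have := Finset.mem_range.mp hr2; omega)
    positivity
  have hblock : ∀ r1 ∈ Finset.range (R + 1), ∀ r2 ∈ Finset.range (R + 1),
      (∑ i : Fin n, ∑ j : Fin n, E r1 i j * E r2 i j)
        ≤ 4 * (w r1 * w r2 * ((n : ℝ) / 2 ^ (max r1 r2)) ^ 2) := by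
    intro r1 hr1 r2 hr2
    have hr1R : r1 ≤ R := by have := Finset.mem_range.mp hr1; omega
    have hr2R : r2 ≤ R := by have := Finset.mem_range.mp hr2; omega
    have hw1 := hw r1 hr1R
    have hw2 := hw r2 hr2R
    set q := (n : ℝ) / 2 ^ (max r1 r2) with hq
    have hq1 : 1 ≤ q := by
      rw [hq, le_div_iff₀ (by positivity)]
      have h1 : (2:ℕ) ^ (max r1 r2) ≤ n :=
        le_trans (Nat.pow_le_pow_right (by omega) (by omega : max r1 r2 ≤ R)) hR
      have h2 : ((2:ℕ) ^ (max r1 r2) : ℝ) ≤ (n:ℝ) := by exact_mod_cast h1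
      push_cast at h2
      linarith
    set χ : Fin n → ℝ := fun k => if ((k:ℕ):ℝ) < q then (1:ℝ) else 0 with hχ
    have hχnn : ∀ k, 0 ≤ χ k := by
      intro k; rw [hχ]; dsimp only; split <;> norm_num
    have hqmono : ∀ r', r' ≤ max r1 r2 → q ≤ (n:ℝ) / 2 ^ r' := by
      intro r' hr'
      rw [hq]
      have hpow : (2:ℝ) ^ r' ≤ 2 ^ (max r1 r2) := by
        apply pow_le_pow_right₀ (by norm_num) hr'
      apply div_le_div_of_nonneg_left (by positivity) (by positivity) hpow
    have hpoint : ∀ i j : Fin n, E r1 i j * E r2 i j ≤ (w r1 * w r2) * (χ i * χ j) := by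
      intro i j
      by_cases hc : (((i:ℕ):ℝ) < q ∧ ((j:ℕ):ℝ) < q)
      · have hχi : χ i = 1 := by rw [hχ]; exact if_pos hc.1
        have hχj : χ j = 1 := by rw [hχ]; exact if_pos hc.2
        have hb1 : |E r1 i j| ≤ w r1 := hE₁ r1 hr1R i j
          ⟨lt_of_lt_of_le hc.1 (hqmono r1 (le_max_left _ _)),
           lt_of_lt_of_le hc.2 (hqmono r1 (le_max_left _ _))⟩
        have hb2 : |E r2 i j| ≤ w r2 := hE₁ r2 hr2R i j
          ⟨lt_of_lt_of_le hc.1 (hqmono r2 (le_max_right _ _)),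
           lt_of_lt_of_le hc.2 (hqmono r2 (le_max_right _ _))⟩
        rw [hχi, hχj]
        calc E r1 i j * E r2 i j ≤ |E r1 i j * E r2 i j| := le_abs_self _
          _ = |E r1 i j| * |E r2 i j| := abs_mul _ _
          _ ≤ w r1 * w r2 := mul_le_mul hb1 hb2 (abs_nonneg _) hw1
          _ = w r1 * w r2 * (1 * 1) := by ring
      · have hrhs : 0 ≤ (w r1 * w r2) * (χ i * χ j) :=
          mul_nonneg (mul_nonneg hw1 hw2) (mul_nonneg (hχnn i) (hχnn j))
        rcases max_choice r1 r2 with he | he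
        · have h0 : E r1 i j = 0 := by
            apply hE₂ r1 hr1R i j
            rw [← he, ← hq]
            exact hc
          rw [h0, zero_mul]
          exact hrhs
        · have h0 : E r2 i j = 0 := by
            apply hE₂ r2 hr2R i j
            rw [← he, ← hq]
            exact hc
          rw [h0, mul_zero]
          exact hrhs
    have hχsum : ∑ k : Fin n, χ k ≤ 2 * q := by
      have := indicator_count n q hq1
      simpa [hχ] using this
    have hχ0 : 0 ≤ ∑ k : Fin n, χ k := Finset.sum_nonneg (fun k _ => hχnn k)
    calc (∑ i : Fin n, ∑ j : Fin n, E r1 i j * E r2 i j)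
        ≤ ∑ i : Fin n, ∑ j : Fin n, (w r1 * w r2) * (χ i * χ j) :=
          Finset.sum_le_sum (fun i _ => Finset.sum_le_sum (fun j _ => hpoint i j))
      _ = (w r1 * w r2) * ((∑ k : Fin n, χ k) * (∑ k : Fin n, χ k)) := by
          rw [Finset.sum_mul_sum]
          simp only [Finset.mul_sum]
      _ ≤ (w r1 * w r2) * ((2 * q) * (2 * q)) := by
          apply mul_le_mul_of_nonneg_left _ (mul_nonneg hw1 hw2)
          exact mul_le_mul hχsum hχsum hχ0 (by positivity)
      _ = 4 * (w r1 * w r2 * q ^ 2) := by ring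
  have hexp : ∑ i : Fin n, ∑ j : Fin n, (S i j) ^ 2
      = ∑ r1 ∈ Finset.range (R + 1), ∑ r2 ∈ Finset.range (R + 1),
          ∑ i : Fin n, ∑ j : Fin n, E r1 i j * E r2 i j := by
    have e1 : ∀ i j : Fin n, (S i j) ^ 2
        = ∑ r1 ∈ Finset.range (R + 1), ∑ r2 ∈ Finset.range (R + 1), E r1 i j * E r2 i j := by
      intro i j
      rw [hSapp i j, sq, Finset.sum_mul_sum]
    calc ∑ i : Fin n, ∑ j : Fin n, (S i j) ^ 2
        = ∑ i : Fin n, ∑ j : Fin n, ∑ r1 ∈ Finset.range (R + 1), ∑ r2 ∈ Finset.range (R + 1),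
            E r1 i j * E r2 i j :=
          Finset.sum_congr rfl (fun i _ => Finset.sum_congr rfl (fun j _ => e1 i j))
      _ = ∑ i : Fin n, ∑ r1 ∈ Finset.range (R + 1), ∑ j : Fin n, ∑ r2 ∈ Finset.range (R + 1),
            E r1 i j * E r2 i j :=
          Finset.sum_congr rfl (fun i _ => Finset.sum_comm)
      _ = ∑ r1 ∈ Finset.range (R + 1), ∑ i : Fin n, ∑ j : Fin n, ∑ r2 ∈ Finset.range (R + 1),
            E r1 i j * E r2 i j := Finset.sum_comm
      _ = ∑ r1 ∈ Finset.range (R + 1), ∑ i : Fin n, ∑ r2 ∈ Finset.range (R + 1), ∑ j : Fin n,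
            E r1 i j * E r2 i j :=
          Finset.sum_congr rfl (fun r1 _ => Finset.sum_congr rfl (fun i _ => Finset.sum_comm))
      _ = ∑ r1 ∈ Finset.range (R + 1), ∑ r2 ∈ Finset.range (R + 1), ∑ i : Fin n, ∑ j : Fin n,
            E r1 i j * E r2 i j :=
          Finset.sum_congr rfl (fun r1 _ => Finset.sum_comm)
  have hfinal : ∑ i : Fin n, ∑ j : Fin n, (S i j) ^ 2
      ≤ 4 * ∑ r₁ ∈ Finset.range (R + 1), ∑ r₂ ∈ Finset.range (R + 1),
          w r₁ * w r₂ * ((n : ℝ) / 2 ^ (max r₁ r₂)) ^ 2 := by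
    rw [hexp]
    calc ∑ r1 ∈ Finset.range (R + 1), ∑ r2 ∈ Finset.range (R + 1),
          ∑ i : Fin n, ∑ j : Fin n, E r1 i j * E r2 i j
        ≤ ∑ r1 ∈ Finset.range (R + 1), ∑ r2 ∈ Finset.range (R + 1),
            4 * (w r1 * w r2 * ((n : ℝ) / 2 ^ (max r1 r2)) ^ 2) :=
          Finset.sum_le_sum (fun r1 h1 => Finset.sum_le_sum (fun r2 h2 => hblock r1 h1 r2 h2))
      _ = 4 * ∑ r₁ ∈ Finset.range (R + 1), ∑ r₂ ∈ Finset.range (R + 1),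
            w r₁ * w r₂ * ((n : ℝ) / 2 ^ (max r₁ r₂)) ^ 2 := by
          simp only [Finset.mul_sum]
  have hfro : froNorm S ≤ 10 * Real.sqrt (∑ r₁ ∈ Finset.range (R + 1),
      ∑ r₂ ∈ Finset.range (R + 1), w r₁ * w r₂ * ((n : ℝ) / 2 ^ (max r₁ r₂)) ^ 2) := by
    show Real.sqrt (∑ i : Fin n, ∑ j : Fin n, (S i j) ^ 2) ≤ _
    calc Real.sqrt (∑ i : Fin n, ∑ j : Fin n, (S i j) ^ 2)
        ≤ Real.sqrt (10 ^ 2 * ∑ r₁ ∈ Finset.range (R + 1), ∑ r₂ ∈ Finset.range (R + 1),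
            w r₁ * w r₂ * ((n : ℝ) / 2 ^ (max r₁ r₂)) ^ 2) := by
          apply Real.sqrt_le_sqrt
          nlinarith [hfinal, hX0]
      _ = 10 * Real.sqrt (∑ r₁ ∈ Finset.range (R + 1), ∑ r₂ ∈ Finset.range (R + 1),
            w r₁ * w r₂ * ((n : ℝ) / 2 ^ (max r₁ r₂)) ^ 2) := by
          rw [Real.sqrt_mul (by positivity) _]
          congr 1
          rw [show ((10:ℝ)^2 : ℝ) = 10 ^ 2 by norm_num, Real.sqrt_sq (by norm_num)]
  exact ⟨hspec, hfro⟩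
end

section
/- There is an absolute constant C > 0 such that the following holds. Let n ≥ 2 and R ≥ 1 be integers and λ ≥ 1 a real number with 2^R·λ ≤ n. For each r ∈ {1,…,R}, define u_r ∈ ℝ^n by (u_r)_i = e^{−2^{r−1}·λ·i/(2n)} for i ∈ {0,…,n−1}. Then for any nonnegative weights w_1, …, w_R: ‖Σ_{r=1}^{R} w_r u_r u_r^T‖₂ ≤ C · max_{1≤r≤R} w_r · n/(2^r·λ), and ‖Σ_{r=1}^{R} w_r u_r u_r^T‖_F ≤ C · √( Σ_{r₁=1}^{R} Σ_{r₂=1}^{R} w_{r₁} w_{r₂} · (n/(λ·2^{max(r₁,r₂)}))² ). -/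
open scoped BigOperators

-- geometric sum bound
lemma geomAux {q : ℝ} (h0 : 0 ≤ q) (h1 : q < 1) (n : ℕ) :
    ∑ i ∈ Finset.range n, q ^ i ≤ 1 / (1 - q) := by
  rw [geom_sum_eq h1.ne]
  have hq : 0 < 1 - q := by linarith
  have : (q ^ n - 1) / (q - 1) = (1 - q ^ n) / (1 - q) := by
    rw [← neg_div_neg_eq]; ring_nf
  rw [this]
  have hp : q ^ n ≥ 0 := pow_nonneg h0 n
  gcongr
  linarith

lemma expSum {c : ℝ} (hc : 0 < c) (hc1 : c ≤ 1) (n : ℕ) :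
    ∑ i ∈ Finset.range n, (Real.exp (-c)) ^ i ≤ 2 / c := by
  have he1 : Real.exp (-c) < 1 := Real.exp_lt_one_iff.mpr (by linarith)
  have h := geomAux (Real.exp_nonneg _) he1 n
  refine h.trans ?_
  have hkey : Real.exp (-c) ≤ 1 - c / 2 := by
    have h1 : c + 1 ≤ Real.exp c := Real.add_one_le_exp c
    have h2 : Real.exp (-c) * Real.exp c = 1 := by
      rw [← Real.exp_add]; simp
    have h3 : Real.exp (-c) > 0 := Real.exp_pos _
    nlinarith
  have hd : (0:ℝ) < 1 - Real.exp (-c) := by linarith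
  rw [div_le_div_iff₀ hd hc]
  nlinarith

lemma innerBound (n R : ℕ) (lam : ℝ) (hn : 2 ≤ n) (hlam : 1 ≤ lam)
    (hRn : (2:ℝ)^R*lam ≤ n) (r s : ℕ) (hr1 : 1 ≤ r) (hrR : r ≤ R) (hs1 : 1 ≤ s) (hsR : s ≤ R) :
    ∑ i : Fin n, Real.exp (-((2:ℝ)^(r-1)*lam*(i:ℕ))/(2*n)) *
      Real.exp (-((2:ℝ)^(s-1)*lam*(i:ℕ))/(2*n)) ≤ 8*n/(2^(max r s)*lam) := by
  have hn0 : (0:ℝ) < n := by positivity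
  have hlam0 : (0:ℝ) < lam := by linarith
  set c : ℝ := ((2:ℝ)^(r-1)+2^(s-1))*lam/(2*n) with hc_def
  have hterm : ∀ i : Fin n,
      Real.exp (-((2:ℝ)^(r-1)*lam*(i:ℕ))/(2*n)) * Real.exp (-((2:ℝ)^(s-1)*lam*(i:ℕ))/(2*n))
        = (Real.exp (-c)) ^ (i:ℕ) := by
    intro i
    rw [← Real.exp_add, ← Real.exp_nat_mul]
    congr 1
    rw [hc_def]
    push_cast
    ring
  rw [Finset.sum_congr rfl (fun i _ => hterm i), Fin.sum_univ_eq_sum_range]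
  -- bounds on c
  have hm1 : 1 ≤ max r s := le_max_of_le_left hr1
  have hpow : (2:ℝ)^(max r s) = 2 * 2^(max r s - 1) := by
    rw [← pow_succ']
    congr 1
    omega
  have hle1 : (2:ℝ)^(max r s - 1) ≤ 2^(r-1) + 2^(s-1) := by
    rcases le_total r s with h | h
    · rw [max_eq_right h]
      have : (0:ℝ) < 2^(r-1) := by positivity
      linarith
    · rw [max_eq_left h]
      have : (0:ℝ) < 2^(s-1) := by positivity
      linarith
  have hle2 : (2:ℝ)^(r-1) + 2^(s-1) ≤ 2^(max r s) := by
    rw [hpow]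
    have h1 : (2:ℝ)^(r-1) ≤ 2^(max r s - 1) := by
      apply pow_le_pow_right₀ (by norm_num); omega
    have h2 : (2:ℝ)^(s-1) ≤ 2^(max r s - 1) := by
      apply pow_le_pow_right₀ (by norm_num); omega
    linarith
  have hmR : (2:ℝ)^(max r s) ≤ 2^R := by
    apply pow_le_pow_right₀ (by norm_num); omega
  have hcpos : 0 < c := by positivity
  have hc1 : c ≤ 1 := by
    rw [hc_def, div_le_one (by positivity)]
    have : ((2:ℝ)^(r-1)+2^(s-1))*lam ≤ 2^R * lam := by
      apply mul_le_mul_of_nonneg_right (hle2.trans hmR) (le_of_lt hlam0)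
    nlinarith
  refine (expSum hcpos hc1 n).trans ?_
  rw [hc_def]
  rw [div_div_eq_mul_div, div_le_div_iff₀ (by positivity) (by positivity)]
  have hpm : (0:ℝ) < 2^(max r s - 1) := by positivity
  nlinarith [mul_pos hn0 hlam0, mul_pos (mul_pos hn0 hlam0) hpm]

lemma dSum (R r : ℕ) (hr1 : 1 ≤ r) (hrR : r ≤ R) :
    ∑ s ∈ Finset.Icc 1 R, ((Real.sqrt 2)⁻¹)^((r-s)+(s-r)) ≤ 7 := by
  set q : ℝ := (Real.sqrt 2)⁻¹ with hq_def
  have hs2 : (1:ℝ) < Real.sqrt 2 := by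
    rw [show (1:ℝ) = Real.sqrt 1 by simp]
    exact Real.sqrt_lt_sqrt (by norm_num) (by norm_num)
  have hq0 : 0 ≤ q := by positivity
  have hq1 : q < 1 := by
    rw [hq_def, inv_lt_one_iff₀]; right; exact hs2
  have hq57 : q ≤ 5/7 := by
    have hsq := Real.sq_sqrt (by norm_num : (0:ℝ) ≤ 2)
    have h0 := Real.sqrt_nonneg 2
    rw [hq_def, inv_le_comm₀ (by nlinarith) (by norm_num)]
    nlinarith
  have hsplit : Finset.Icc 1 R = Finset.Icc 1 r ∪ Finset.Ioc r R := by
    ext a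
    simp only [Finset.mem_Icc, Finset.mem_Ioc, Finset.mem_union]
    omega
  have hdisj : Disjoint (Finset.Icc 1 r) (Finset.Ioc r R) := by
    rw [Finset.disjoint_left]
    intro a ha hb
    simp only [Finset.mem_Icc, Finset.mem_Ioc] at ha hb
    omega
  rw [hsplit, Finset.sum_union hdisj]
  have hgeom : ∀ m : ℕ, ∑ k ∈ Finset.range m, q ^ k ≤ 1/(1-q) := geomAux hq0 hq1
  have hp1 : ∑ s ∈ Finset.Icc 1 r, q^((r-s)+(s-r)) ≤ 1/(1-q) := by
    have he : ∑ s ∈ Finset.Icc 1 r, q^((r-s)+(s-r)) = ∑ k ∈ Finset.range r, q ^ k := by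
      apply Finset.sum_nbij' (i := fun s => r - s) (j := fun k => r - k)
      · intro a ha; simp only [Finset.mem_Icc] at ha; simp only [Finset.mem_range]; omega
      · intro a ha; simp only [Finset.mem_range] at ha; simp only [Finset.mem_Icc]; omega
      · intro a ha; simp only [Finset.mem_Icc] at ha; omega
      · intro a ha; simp only [Finset.mem_range] at ha; omega
      · intro a ha; simp only [Finset.mem_Icc] at ha
        congr 1; omega
    rw [he]; exact hgeom r
  have hp2 : ∑ s ∈ Finset.Ioc r R, q^((r-s)+(s-r)) ≤ 1/(1-q) := by
    have he : ∑ s ∈ Finset.Ioc r R, q^((r-s)+(s-r)) = ∑ k ∈ Finset.Icc 1 (R-r), q ^ k := by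
      apply Finset.sum_nbij' (i := fun s => s - r) (j := fun k => k + r)
      · intro a ha; simp only [Finset.mem_Ioc] at ha; simp only [Finset.mem_Icc]; omega
      · intro a ha; simp only [Finset.mem_Icc] at ha; simp only [Finset.mem_Ioc]; omega
      · intro a ha; simp only [Finset.mem_Ioc] at ha; omega
      · intro a ha; simp only [Finset.mem_Icc] at ha; omega
      · intro a ha; simp only [Finset.mem_Ioc] at ha
        congr 1; omega
    rw [he]
    refine le_trans ?_ (hgeom (R - r + 1))
    apply Finset.sum_le_sum_of_subset_of_nonneg
    · intro a ha; simp only [Finset.mem_Icc] at ha; simp only [Finset.mem_range]; omega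
    · intro a _ _; positivity
  have hd : (2:ℝ)/7 ≤ 1 - q := by linarith
  have : (1:ℝ)/(1-q) ≤ 7/2 := by
    rw [div_le_div_iff₀ (by linarith) (by norm_num)]
    linarith
  linarith

lemma expand2 {n : ℕ} (t : Finset ℕ) (c : ℕ → ℝ) (f : ℕ → Fin n → ℝ) :
    ∑ i : Fin n, (∑ r ∈ t, c r * f r i)^2
      = ∑ r1 ∈ t, ∑ r2 ∈ t, (c r1 * c r2) * ∑ i : Fin n, f r1 i * f r2 i := by
  calc ∑ i : Fin n, (∑ r ∈ t, c r * f r i)^2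
      = ∑ i : Fin n, ∑ r1 ∈ t, ∑ r2 ∈ t, (c r1 * f r1 i) * (c r2 * f r2 i) := by
        refine Finset.sum_congr rfl fun i _ => ?_
        rw [sq, Finset.sum_mul_sum]
    _ = ∑ r1 ∈ t, ∑ i : Fin n, ∑ r2 ∈ t, (c r1 * f r1 i) * (c r2 * f r2 i) :=
        Finset.sum_comm
    _ = ∑ r1 ∈ t, ∑ r2 ∈ t, ∑ i : Fin n, (c r1 * f r1 i) * (c r2 * f r2 i) :=
        Finset.sum_congr rfl fun r1 _ => Finset.sum_comm
    _ = ∑ r1 ∈ t, ∑ r2 ∈ t, (c r1 * c r2) * ∑ i : Fin n, f r1 i * f r2 i := by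
        refine Finset.sum_congr rfl fun r1 _ => Finset.sum_congr rfl fun r2 _ => ?_
        rw [Finset.mul_sum]
        exact Finset.sum_congr rfl fun i _ => by ring




lemma pairBound (wr ws pr ps Sv nn lam M q : ℝ) (r s : ℕ)
    (hq0 : 0 < q) (hq2 : q^2 = 1/2)
    (hn0 : 0 < nn) (hlam0 : 0 < lam)
    (hwr : 0 ≤ wr) (hws : 0 ≤ ws)
    (hS0 : 0 ≤ Sv) (hSb : Sv ≤ 8 * (nn/(2^(max r s) * lam)))
    (hMr : wr * nn/(2^r*lam) ≤ M) (hMs : ws * nn/(2^s*lam) ≤ M) :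
    ((wr*pr)*(ws*ps))*Sv ≤ 4*(q^((r-s)+(s-r))*M)*(wr*pr^2 + ws*ps^2) := by
  set d : ℕ := (r-s)+(s-r) with hd_def
  set m : ℕ := max r s with hm_def
  set b : ℝ := nn/(2^m * lam) with hb_def
  have hb0 : 0 < b := by rw [hb_def]; positivity
  have h1 : ((wr*pr)*(ws*ps))*Sv ≤ ((wr * |pr|) * (ws * |ps|)) * (8*b) := by
    apply mul_le_mul ?_ hSb hS0 (by positivity)
    calc (wr*pr)*(ws*ps) ≤ |(wr*pr)*(ws*ps)| := le_abs_self _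
      _ = (wr * |pr|) * (ws * |ps|) := by
          rw [abs_mul, abs_mul, abs_mul, abs_of_nonneg hwr, abs_of_nonneg hws]
  set γ : ℝ := (2:ℝ)^m/2^s * q^d with hγ_def
  have hγ0 : 0 < γ := by rw [hγ_def]; positivity
  have hqd0 : (0:ℝ) < q^d := pow_pos hq0 d
  have hgam1 : ws * b * γ ≤ q^d * M := by
    have heq : ws * b * γ = (ws * nn/(2^s*lam)) * q^d := by
      rw [hb_def, hγ_def]
      field_simp
    rw [heq]
    calc (ws * nn/(2^s*lam)) * q^d ≤ M * q^d :=
          mul_le_mul_of_nonneg_right hMs (le_of_lt hqd0)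
      _ = q^d * M := mul_comm _ _
  have hgam2 : wr * b / γ ≤ q^d * M := by
    have hpow2 : (2:ℝ)^r * 2^s * 2^d = ((2:ℝ)^m)^2 := by
      rw [← pow_add, ← pow_add, ← pow_mul]
      congr 1
      omega
    have hqd2 : q^d * q^d * (2:ℝ)^d = 1 := by
      rw [← mul_pow, ← mul_pow,
        show q*q*2 = 1 by rw [show q*q = q^2 by ring, hq2]; norm_num, one_pow]
    have heq : wr * b / γ = (wr * nn/(2^r*lam)) * q^d := by
      rw [hb_def, hγ_def]
      have h2m : ((2:ℝ)^m) ≠ 0 := by positivity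
      have h2r : ((2:ℝ)^r) ≠ 0 := by positivity
      have h2s : ((2:ℝ)^s) ≠ 0 := by positivity
      have hqd : q^d ≠ 0 := ne_of_gt hqd0
      have hlamne : lam ≠ 0 := ne_of_gt hlam0
      field_simp
      linear_combination wr*(q^(d*2)*hpow2 - 2^r*2^s*hqd2)
    rw [heq]
    calc (wr * nn/(2^r*lam)) * q^d ≤ M * q^d :=
          mul_le_mul_of_nonneg_right hMr (le_of_lt hqd0)
      _ = q^d * M := mul_comm _ _
  have hAM : 2*(|pr| * |ps|) ≤ γ * pr^2 + ps^2/γ := by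
    have key2 : (2*(|pr| * |ps|)) * γ ≤ (γ * pr^2 + ps^2/γ) * γ := by
      rw [← sq_abs pr, ← sq_abs ps]
      have h4 : |ps|^2/γ * γ = |ps|^2 := div_mul_cancel₀ _ (ne_of_gt hγ0)
      nlinarith [sq_nonneg (γ * |pr| - |ps|)]
    exact le_of_mul_le_mul_right key2 hγ0
  have hAM' : (wr*ws*b) * (2*(|pr| * |ps|))
      ≤ (ws*b*γ)*(wr*pr^2) + (wr*b/γ)*(ws*ps^2) := by
    have h5 : (wr*ws*b) * (2*(|pr| * |ps|))
        ≤ (wr*ws*b) * (γ * pr^2 + ps^2/γ) :=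
      mul_le_mul_of_nonneg_left hAM (by positivity)
    have h6 : (wr*ws*b) * (γ * pr^2 + ps^2/γ)
        = (ws*b*γ)*(wr*pr^2) + (wr*b/γ)*(ws*ps^2) := by
      field_simp
    linarith [h5, h6.le, h6.ge]
  have h2 : ((wr * |pr|) * (ws * |ps|)) * (8*b)
      ≤ 4 * (q^d * M) * (wr * pr^2 + ws * ps^2) := by
    have hy1 : (ws*b*γ)*(wr*pr^2) ≤ (q^d*M)*(wr*pr^2) :=
      mul_le_mul_of_nonneg_right hgam1 (by positivity)
    have hy2 : (wr*b/γ)*(ws*ps^2) ≤ (q^d*M)*(ws*ps^2) :=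
      mul_le_mul_of_nonneg_right hgam2 (by positivity)
    calc ((wr * |pr|) * (ws * |ps|)) * (8*b)
        = 4*((wr*ws*b) * (2*(|pr| * |ps|))) := by ring
      _ ≤ 4*((ws*b*γ)*(wr*pr^2) + (wr*b/γ)*(ws*ps^2)) := by linarith
      _ ≤ 4*((q^d*M)*(wr*pr^2) + (q^d*M)*(ws*ps^2)) := by linarith
      _ = 4 * (q^d * M) * (wr * pr^2 + ws * ps^2) := by ring
  exact h1.trans h2

/-- Correlation decay for rank-one outer products of exponentially decaying
vectors `(u_r)_i = e^{−2^{r−1}λi/(2n)}`. -/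
theorem exp_outer_correlation :
    ∃ C : ℝ, 0 < C ∧
      ∀ (n R : ℕ) (lam : ℝ) (_ : 2 ≤ n) (hR : 1 ≤ R) (_ : 1 ≤ lam)
        (_ : (2 : ℝ) ^ R * lam ≤ n)
        (u : ℕ → Fin n → ℝ)
        (_ : ∀ r, 1 ≤ r → r ≤ R → ∀ i : Fin n,
          u r i = Real.exp (-((2 : ℝ) ^ (r - 1) * lam * i) / (2 * n)))
        (w : ℕ → ℝ) (_ : ∀ r, 1 ≤ r → r ≤ R → 0 ≤ w r),
        specNorm (∑ r ∈ Finset.Icc 1 R,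
            Matrix.of (fun i j : Fin n => w r * u r i * u r j)) ≤
          C * ((Finset.Icc 1 R).sup' (Finset.nonempty_Icc.mpr hR)
            (fun r => w r * n / (2 ^ r * lam))) ∧
        froNorm (∑ r ∈ Finset.Icc 1 R,
            Matrix.of (fun i j : Fin n => w r * u r i * u r j)) ≤
          C * Real.sqrt (∑ r₁ ∈ Finset.Icc 1 R, ∑ r₂ ∈ Finset.Icc 1 R,
            w r₁ * w r₂ * ((n : ℝ) / (lam * 2 ^ (max r₁ r₂))) ^ 2) := by
  refine ⟨56, by norm_num, ?_⟩
  intro n R lam hn hR hlam hRn u hu w hw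
  have hn0 : (0:ℝ) < n := by
    have : (0:ℕ) < n := by omega
    exact_mod_cast this
  have hlam0 : (0:ℝ) < lam := by linarith
  set A := ∑ r ∈ Finset.Icc 1 R, Matrix.of (fun i j : Fin n => w r * u r i * u r j) with hA
  have hAe : ∀ i j, A i j = ∑ r ∈ Finset.Icc 1 R, w r * u r i * u r j := by
    intro i j
    rw [hA]
    simp [Matrix.sum_apply]
  set S : ℕ → ℕ → ℝ := fun r1 r2 => ∑ i : Fin n, u r1 i * u r2 i with hS_def
  have hu0 : ∀ r, 1 ≤ r → r ≤ R → ∀ i, 0 < u r i := by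
    intro r h1 h2 i
    rw [hu r h1 h2 i]
    exact Real.exp_pos _
  have hS0 : ∀ r1 r2, 1 ≤ r1 → r1 ≤ R → 1 ≤ r2 → r2 ≤ R → 0 ≤ S r1 r2 := by
    intro r1 r2 h1 h2 h3 h4
    apply Finset.sum_nonneg
    intro i _
    exact le_of_lt (mul_pos (hu0 r1 h1 h2 i) (hu0 r2 h3 h4 i))
  have hSb : ∀ r1 r2, 1 ≤ r1 → r1 ≤ R → 1 ≤ r2 → r2 ≤ R →
      S r1 r2 ≤ 8 * n / (2^(max r1 r2) * lam) := by
    intro r1 r2 h1 h2 h3 h4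
    have := innerBound n R lam hn hlam hRn r1 r2 h1 h2 h3 h4
    refine le_trans (le_of_eq ?_) this
    rw [hS_def]
    refine Finset.sum_congr rfl fun i _ => ?_
    rw [hu r1 h1 h2 i, hu r2 h3 h4 i]
  constructor
  · -- spectral norm bound
    set q : ℝ := (Real.sqrt 2)⁻¹ with hq_def
    have hs2 : (1:ℝ) < Real.sqrt 2 := by
      rw [show (1:ℝ) = Real.sqrt 1 by simp]
      exact Real.sqrt_lt_sqrt (by norm_num) (by norm_num)
    have hq0 : 0 < q := by rw [hq_def]; positivity
    have hq2 : q^2 = 1/2 := by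
      rw [hq_def, inv_pow, Real.sq_sqrt (by norm_num : (0:ℝ) ≤ 2)]
      norm_num
    set M := (Finset.Icc 1 R).sup' (Finset.nonempty_Icc.mpr hR)
        (fun r => w r * n / (2 ^ r * lam)) with hM_def
    have hM : ∀ r, 1 ≤ r → r ≤ R → w r * n / (2^r * lam) ≤ M := by
      intro r h1 h2
      rw [hM_def]
      exact Finset.le_sup' (f := fun r => w r * (n:ℝ) / (2 ^ r * lam))
        (Finset.mem_Icc.mpr ⟨h1, h2⟩)
    have hM0 : 0 ≤ M := by
      refine le_trans ?_ (hM 1 le_rfl hR)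
      have h1 := hw 1 le_rfl hR
      positivity
    have hnonempty : Nonempty {x : Fin n → ℝ // euclNorm x ≤ 1} :=
      ⟨⟨fun _ => 0, by simp [euclNorm]⟩⟩
    unfold specNorm
    refine ciSup_le ?_
    rintro ⟨x, hx⟩
    show euclNorm (A.mulVec x) ≤ 56 * M
    set p : ℕ → ℝ := fun r => ∑ j, u r j * x j with hp_def
    have hmul : ∀ i, A.mulVec x i = ∑ r ∈ Finset.Icc 1 R, (w r * p r) * u r i := by
      intro i
      show ∑ j, A i j * x j = _
      calc ∑ j, A i j * x j
          = ∑ j, (∑ r ∈ Finset.Icc 1 R, w r * u r i * u r j) * x j :=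
            Finset.sum_congr rfl fun j _ => by rw [hAe i j]
        _ = ∑ j, ∑ r ∈ Finset.Icc 1 R, (w r * u r i * u r j) * x j :=
            Finset.sum_congr rfl fun j _ => Finset.sum_mul _ _ _
        _ = ∑ r ∈ Finset.Icc 1 R, ∑ j, (w r * u r i * u r j) * x j := Finset.sum_comm
        _ = ∑ r ∈ Finset.Icc 1 R, (w r * p r) * u r i := by
            refine Finset.sum_congr rfl fun r _ => ?_
            rw [hp_def]
            simp only
            rw [Finset.mul_sum, Finset.sum_mul]
            exact Finset.sum_congr rfl fun j _ => by ring
    set N : ℝ := euclNorm (A.mulVec x) with hN_def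
    have hN0 : 0 ≤ N := Real.sqrt_nonneg _
    have hN2' : N^2 = ∑ i, (A.mulVec x i)^2 :=
      Real.sq_sqrt (Finset.sum_nonneg fun i _ => sq_nonneg _)
    have hN2 : N^2 = ∑ r1 ∈ Finset.Icc 1 R, ∑ r2 ∈ Finset.Icc 1 R,
        ((w r1 * p r1) * (w r2 * p r2)) * S r1 r2 := by
      rw [hN2']
      calc ∑ i, (A.mulVec x i)^2
          = ∑ i : Fin n, (∑ r ∈ Finset.Icc 1 R, (w r * p r) * u r i)^2 :=
            Finset.sum_congr rfl fun i _ => by rw [hmul i]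
        _ = ∑ r1 ∈ Finset.Icc 1 R, ∑ r2 ∈ Finset.Icc 1 R,
            ((w r1 * p r1) * (w r2 * p r2)) * S r1 r2 :=
            expand2 (Finset.Icc 1 R) (fun r => w r * p r) u
    have key : ∀ r ∈ Finset.Icc 1 R, ∀ s ∈ Finset.Icc 1 R,
        ((w r * p r) * (w s * p s)) * S r s
          ≤ 4 * (q^((r-s)+(s-r)) * M) * (w r * (p r)^2 + w s * (p s)^2) := by
      intro r hr s hs
      rw [Finset.mem_Icc] at hr hs
      refine pairBound (w r) (w s) (p r) (p s) (S r s) n lam M q r s hq0 hq2 hn0 hlam0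
        (hw r hr.1 hr.2) (hw s hs.1 hs.2) (hS0 r s hr.1 hr.2 hs.1 hs.2) ?_
        (hM r hr.1 hr.2) (hM s hs.1 hs.2)
      have h := hSb r s hr.1 hr.2 hs.1 hs.2
      rw [mul_div_assoc] at h
      exact h
    set T : ℝ := ∑ r ∈ Finset.Icc 1 R, w r * (p r)^2 with hT_def
    have hT0 : 0 ≤ T := by
      rw [hT_def]
      refine Finset.sum_nonneg fun r hr => ?_
      rw [Finset.mem_Icc] at hr
      have := hw r hr.1 hr.2
      positivity
    have bound1 : ∑ r ∈ Finset.Icc 1 R, ∑ s ∈ Finset.Icc 1 R,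
        q^((r-s)+(s-r))*(w r*(p r)^2) ≤ 7*T := by
      rw [hT_def, Finset.mul_sum]
      refine Finset.sum_le_sum fun r hr => ?_
      rw [Finset.mem_Icc] at hr
      rw [← Finset.sum_mul]
      have hd := dSum R r hr.1 hr.2
      have hwp : 0 ≤ w r * (p r)^2 := by
        have := hw r hr.1 hr.2
        positivity
      calc (∑ s ∈ Finset.Icc 1 R, q^((r-s)+(s-r))) * (w r*(p r)^2)
          ≤ 7 * (w r*(p r)^2) := mul_le_mul_of_nonneg_right hd hwp
        _ = 7 * (w r*(p r)^2) := rfl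
    have bound2 : ∑ r ∈ Finset.Icc 1 R, ∑ s ∈ Finset.Icc 1 R,
        q^((r-s)+(s-r))*(w s*(p s)^2) ≤ 7*T := by
      rw [Finset.sum_comm]
      rw [hT_def, Finset.mul_sum]
      refine Finset.sum_le_sum fun s hs => ?_
      rw [Finset.mem_Icc] at hs
      rw [← Finset.sum_mul]
      have hd : ∑ r ∈ Finset.Icc 1 R, q^((r-s)+(s-r)) ≤ 7 := by
        have h := dSum R s hs.1 hs.2
        refine le_trans (le_of_eq ?_) h
        exact Finset.sum_congr rfl fun r _ => by rw [add_comm]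
      have hwp : 0 ≤ w s * (p s)^2 := by
        have := hw s hs.1 hs.2
        positivity
      exact mul_le_mul_of_nonneg_right hd hwp
    have hNT : N^2 ≤ 56 * M * T := by
      calc N^2 = ∑ r1 ∈ Finset.Icc 1 R, ∑ r2 ∈ Finset.Icc 1 R,
          ((w r1 * p r1) * (w r2 * p r2)) * S r1 r2 := hN2
        _ ≤ ∑ r ∈ Finset.Icc 1 R, ∑ s ∈ Finset.Icc 1 R,
            4 * (q^((r-s)+(s-r)) * M) * (w r * (p r)^2 + w s * (p s)^2) :=
            Finset.sum_le_sum fun r hr => Finset.sum_le_sum fun s hs => key r hr s hs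
        _ = 4*M*(∑ r ∈ Finset.Icc 1 R, ∑ s ∈ Finset.Icc 1 R, q^((r-s)+(s-r))*(w r*(p r)^2))
            + 4*M*(∑ r ∈ Finset.Icc 1 R, ∑ s ∈ Finset.Icc 1 R, q^((r-s)+(s-r))*(w s*(p s)^2)) := by
            rw [Finset.mul_sum, Finset.mul_sum, ← Finset.sum_add_distrib]
            refine Finset.sum_congr rfl fun r _ => ?_
            rw [Finset.mul_sum, Finset.mul_sum, ← Finset.sum_add_distrib]
            refine Finset.sum_congr rfl fun s _ => ?_
            ring
        _ ≤ 4*M*(7*T) + 4*M*(7*T) := by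
            have h1 : 0 ≤ 4*M := by linarith
            exact add_le_add (mul_le_mul_of_nonneg_left bound1 h1)
              (mul_le_mul_of_nonneg_left bound2 h1)
        _ = 56 * M * T := by ring
    have hTx : T = ∑ i, x i * (A.mulVec x i) := by
      rw [hT_def]
      calc ∑ r ∈ Finset.Icc 1 R, w r * (p r)^2
          = ∑ r ∈ Finset.Icc 1 R, ∑ i, x i * ((w r * p r) * u r i) := by
            refine Finset.sum_congr rfl fun r _ => ?_
            rw [hp_def]
            simp only
            rw [show (w r * (∑ j, u r j * x j)^2) =
              (w r * (∑ j, u r j * x j)) * (∑ j, u r j * x j) by ring, Finset.mul_sum]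
            exact Finset.sum_congr rfl fun i _ => by ring
        _ = ∑ i, ∑ r ∈ Finset.Icc 1 R, x i * ((w r * p r) * u r i) := Finset.sum_comm
        _ = ∑ i, x i * (A.mulVec x i) := by
            refine Finset.sum_congr rfl fun i _ => ?_
            rw [hmul i, Finset.mul_sum]
    have hTN : T ≤ N := by
      have hx2 : ∑ i, (x i)^2 ≤ 1 := by
        have h0 : 0 ≤ ∑ i, (x i)^2 := Finset.sum_nonneg fun i _ => sq_nonneg _
        have h1 : Real.sqrt (∑ i, (x i)^2) ≤ 1 := hx
        nlinarith [Real.sq_sqrt h0, Real.sqrt_nonneg (∑ i, (x i)^2)]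
      have hcs' : (∑ i, x i * (A.mulVec x i))^2 ≤ (∑ i, (x i)^2) * (∑ i, (A.mulVec x i)^2) :=
        Finset.sum_mul_sq_le_sq_mul_sq Finset.univ x (A.mulVec x)
      have hT2 : T^2 ≤ N^2 := by
        rw [hTx]
        calc (∑ i, x i * (A.mulVec x i))^2
            ≤ (∑ i, (x i)^2) * (∑ i, (A.mulVec x i)^2) := hcs'
          _ ≤ 1 * (∑ i, (A.mulVec x i)^2) := by
              apply mul_le_mul_of_nonneg_right hx2
              exact Finset.sum_nonneg fun i _ => sq_nonneg _
          _ = N^2 := by rw [hN2']; ring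
      calc T = Real.sqrt (T^2) := (Real.sqrt_sq hT0).symm
        _ ≤ Real.sqrt (N^2) := Real.sqrt_le_sqrt hT2
        _ = N := Real.sqrt_sq hN0
    rcases eq_or_lt_of_le hN0 with h | h
    · rw [← h]
      positivity
    · have hfin : N * N ≤ (56*M) * N := by
        have h1 : 56 * M * T ≤ 56 * M * N := by
          apply mul_le_mul_of_nonneg_left hTN
          linarith
        nlinarith [hNT]
      exact le_of_mul_le_mul_right hfin h
  · -- Frobenius norm bound
    set X := ∑ r₁ ∈ Finset.Icc 1 R, ∑ r₂ ∈ Finset.Icc 1 R,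
        w r₁ * w r₂ * ((n : ℝ) / (lam * 2 ^ (max r₁ r₂))) ^ 2 with hX
    have hfro : ∑ i, ∑ j, (A i j)^2
        = ∑ r1 ∈ Finset.Icc 1 R, ∑ r2 ∈ Finset.Icc 1 R, (w r1 * w r2) * (S r1 r2)^2 := by
      have step1 : ∀ i, ∑ j, (A i j)^2 = ∑ r1 ∈ Finset.Icc 1 R, ∑ r2 ∈ Finset.Icc 1 R,
          ((w r1 * u r1 i) * (w r2 * u r2 i)) * (∑ j, u r1 j * u r2 j) := by
        intro i
        rw [Finset.sum_congr rfl (fun j _ => by rw [hAe i j])]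
        exact expand2 (Finset.Icc 1 R) (fun r => w r * u r i) u
      calc ∑ i, ∑ j, (A i j)^2
          = ∑ i : Fin n, ∑ r1 ∈ Finset.Icc 1 R, ∑ r2 ∈ Finset.Icc 1 R,
            ((w r1 * u r1 i) * (w r2 * u r2 i)) * (∑ j, u r1 j * u r2 j) :=
            Finset.sum_congr rfl fun i _ => step1 i
        _ = ∑ r1 ∈ Finset.Icc 1 R, ∑ i : Fin n, ∑ r2 ∈ Finset.Icc 1 R,
            ((w r1 * u r1 i) * (w r2 * u r2 i)) * (∑ j, u r1 j * u r2 j) :=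
            Finset.sum_comm
        _ = ∑ r1 ∈ Finset.Icc 1 R, ∑ r2 ∈ Finset.Icc 1 R, ∑ i : Fin n,
            ((w r1 * u r1 i) * (w r2 * u r2 i)) * (∑ j, u r1 j * u r2 j) :=
            Finset.sum_congr rfl fun _ _ => Finset.sum_comm
        _ = ∑ r1 ∈ Finset.Icc 1 R, ∑ r2 ∈ Finset.Icc 1 R, (w r1 * w r2) * (S r1 r2)^2 := by
            refine Finset.sum_congr rfl fun r1 _ => Finset.sum_congr rfl fun r2 _ => ?_
            rw [← Finset.sum_mul]
            have h1 : ∑ i : Fin n, (w r1 * u r1 i) * (w r2 * u r2 i)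
                = (w r1 * w r2) * S r1 r2 := by
              rw [hS_def, Finset.mul_sum]
              exact Finset.sum_congr rfl fun i _ => by ring
            rw [h1, hS_def]
            ring
    have hterm : ∀ r1 ∈ Finset.Icc 1 R, ∀ r2 ∈ Finset.Icc 1 R,
        (w r1 * w r2) * (S r1 r2)^2
          ≤ 64 * (w r1 * w r2 * ((n : ℝ) / (lam * 2 ^ (max r1 r2))) ^ 2) := by
      intro r1 hr1 r2 hr2
      rw [Finset.mem_Icc] at hr1 hr2
      have hw1 := hw r1 hr1.1 hr1.2
      have hw2 := hw r2 hr2.1 hr2.2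
      have hb := hSb r1 r2 hr1.1 hr1.2 hr2.1 hr2.2
      have h0 := hS0 r1 r2 hr1.1 hr1.2 hr2.1 hr2.2
      have hsq : (S r1 r2)^2 ≤ (8 * n / (2^(max r1 r2) * lam))^2 :=
        pow_le_pow_left₀ h0 hb 2
      have heq : (8 * (n:ℝ) / (2^(max r1 r2) * lam))^2
          = 64 * ((n : ℝ) / (lam * 2 ^ (max r1 r2))) ^ 2 := by
        rw [div_pow, div_pow]
        ring
      calc (w r1 * w r2) * (S r1 r2)^2
          ≤ (w r1 * w r2) * (8 * n / (2^(max r1 r2) * lam))^2 := by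
            apply mul_le_mul_of_nonneg_left hsq (mul_nonneg hw1 hw2)
        _ = 64 * (w r1 * w r2 * ((n : ℝ) / (lam * 2 ^ (max r1 r2))) ^ 2) := by
            rw [heq]; ring
    have hsum : ∑ i, ∑ j, (A i j)^2 ≤ 64 * X := by
      rw [hfro, hX, Finset.mul_sum]
      refine Finset.sum_le_sum fun r1 hr1 => ?_
      rw [Finset.mul_sum]
      exact Finset.sum_le_sum fun r2 hr2 => hterm r1 hr1 r2 hr2
    have hX0 : 0 ≤ X := by
      rw [hX]
      refine Finset.sum_nonneg fun r1 hr1 => Finset.sum_nonneg fun r2 hr2 => ?_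
      rw [Finset.mem_Icc] at hr1 hr2
      have hw1 := hw r1 hr1.1 hr1.2
      have hw2 := hw r2 hr2.1 hr2.2
      positivity
    calc froNorm A = Real.sqrt (∑ i, ∑ j, (A i j)^2) := rfl
      _ ≤ Real.sqrt (64 * X) := Real.sqrt_le_sqrt hsum
      _ = 8 * Real.sqrt X := by
          rw [Real.sqrt_mul (by norm_num), show (64:ℝ) = 8^2 by norm_num,
            Real.sqrt_sq (by norm_num)]
      _ ≤ 56 * Real.sqrt X := by
          have := Real.sqrt_nonneg X
          linarith
end
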